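/- If E is a 2-concave maximal symmetric Banach sequence space, then the multiplier space M(ℓ₂,E) is 2-convex; in particular, M(ℓ₂,E) is an interpolation space with respect to the Banach couple (ℓ₂, ℓ∞). -/

import Mathlib

open scoped BigOperators ZeroAtInfty

noncomputable section

namespace Paper

/-- The standard unit vector sequences. -/
def e (n : ℕ) : ℕ → ℝ := fun m => if m = n then 1 else 0

/-- Membership in `ℓ_p` for `1 ≤ p < ∞`. -/
def Memlp (p : ℝ) (x : ℕ → ℝ) : Prop := Summable fun n => |x n| ^ p

/-- The `ℓ_p`-norm for `1 ≤ p < ∞`. -/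
def lpNorm (p : ℝ) (x : ℕ → ℝ) : ℝ := (∑' n, |x n| ^ p) ^ (1 / p)

/-- Membership in `c₀`. -/
def MemC0 (x : ℕ → ℝ) : Prop := Filter.Tendsto x Filter.atTop (nhds 0)

/-- Membership in `ℓ_∞`. -/
def MemLinf (x : ℕ → ℝ) : Prop := ∃ C : ℝ, ∀ n, |x n| ≤ C

/-- The sup norm. -/
def linfNorm (x : ℕ → ℝ) : ℝ := ⨆ n, |x n|

/-- The decreasing rearrangement of `(|x n|)` (0-indexed: `decr x n` is the (n+1)-st value). -/
def decr (x : ℕ → ℝ) (n : ℕ) : ℝ :=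
  sInf {a : ℝ | ∃ J : Finset ℕ, J.card ≤ n ∧ ∀ i ∉ J, |x i| ≤ a}

/-- A (real) Banach sequence space: a Banach space of real sequences which is an ideal
with respect to the coordinatewise order and contains a sequence with full support.
Membership in the space is described by the predicate `mem` and the norm by `nrm`. -/
structure SeqSpace where
  mem : (ℕ → ℝ) → Prop
  nrm : (ℕ → ℝ) → ℝ
  zero_mem : mem 0
  add_mem : ∀ {x y}, mem x → mem y → mem (x + y)
  smul_mem : ∀ (c : ℝ) {x}, mem x → mem (c • x)
  nrm_nonneg : ∀ x, 0 ≤ nrm x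
  nrm_eq_zero : ∀ x, mem x → nrm x = 0 → x = 0
  nrm_smul : ∀ (c : ℝ) (x), mem x → nrm (c • x) = |c| * nrm x
  nrm_triangle : ∀ x y, mem x → mem y → nrm (x + y) ≤ nrm x + nrm y
  ideal : ∀ x y, mem y → (∀ n, |x n| ≤ |y n|) → mem x ∧ nrm x ≤ nrm y
  exists_full : ∃ x, mem x ∧ ∀ n, x n ≠ 0
  complete : ∀ f : ℕ → (ℕ → ℝ), (∀ k, mem (f k)) →
    (∀ ε : ℝ, 0 < ε → ∃ N, ∀ m ≥ N, ∀ n ≥ N, nrm (f m - f n) < ε) →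
    ∃ g, mem g ∧ ∀ ε : ℝ, 0 < ε → ∃ N, ∀ n ≥ N, nrm (f n - g) < ε

/-- A sequence space is symmetric if the norm is invariant under passing to the
decreasing rearrangement. -/
def SeqSpace.IsSymmetric (E : SeqSpace) : Prop :=
  ∀ x, E.mem x → E.mem (decr x) ∧ E.nrm (decr x) = E.nrm x

/-- A sequence space is maximal if its closed unit ball is closed under pointwise
convergence. -/
def SeqSpace.IsMaximal (E : SeqSpace) : Prop :=
  ∀ f : ℕ → (ℕ → ℝ), (∀ k, E.mem (f k) ∧ E.nrm (f k) ≤ 1) →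
    ∀ g : ℕ → ℝ, (∀ n, Filter.Tendsto (fun k => f k n) Filter.atTop (nhds (g n))) →
      E.mem g ∧ E.nrm g ≤ 1

/-- All standard unit vectors belong to `E` and have norm one. -/
def SeqSpace.UnitVectors (E : SeqSpace) : Prop := ∀ n, E.mem (e n) ∧ E.nrm (e n) = 1

/-- 2-concavity of a sequence space given by a membership predicate and a norm. -/
def TwoConcaveOn (mem : (ℕ → ℝ) → Prop) (nrm : (ℕ → ℝ) → ℝ) : Prop :=
  ∃ C > 0, ∀ (m : ℕ) (x : Fin m → ℕ → ℝ), (∀ i, mem (x i)) →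
    (∑ i, nrm (x i) ^ 2) ^ ((1 : ℝ) / 2) ≤
      C * nrm (fun n => (∑ i, (x i n) ^ 2) ^ ((1 : ℝ) / 2))

/-- 2-convexity of a sequence space given by a membership predicate and a norm. -/
def TwoConvexOn (mem : (ℕ → ℝ) → Prop) (nrm : (ℕ → ℝ) → ℝ) : Prop :=
  ∃ C > 0, ∀ (m : ℕ) (x : Fin m → ℕ → ℝ), (∀ i, mem (x i)) →
    nrm (fun n => (∑ i, (x i n) ^ 2) ^ ((1 : ℝ) / 2)) ≤
      C * (∑ i, nrm (x i) ^ 2) ^ ((1 : ℝ) / 2)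

def SeqSpace.TwoConcave (E : SeqSpace) : Prop := TwoConcaveOn E.mem E.nrm

def SeqSpace.TwoConvex (E : SeqSpace) : Prop := TwoConvexOn E.mem E.nrm

/-- The indicator sequence of `{0, …, n-1}`, i.e. `∑_{i=1}^n e_i`. -/
def indicator (n : ℕ) : ℕ → ℝ := fun m => if m < n then 1 else 0

/-- The fundamental function `λ_E(n) = ‖∑_{i=1}^n e_i‖_E`. -/
def fundFn (E : SeqSpace) (n : ℕ) : ℝ := E.nrm (indicator n)

/-- The norm `c_p^E = ‖id : ℓ_p → E‖` of the inclusion of `ℓ_p` into the sequence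
space with norm `ν`. -/
def cPN (ν : (ℕ → ℝ) → ℝ) (p : ℝ) : ℝ :=
  sSup {c | ∃ x, Memlp p x ∧ lpNorm p x ≤ 1 ∧ c = ν x}

section Operators

variable {X Y Z : Type*} [NormedAddCommGroup X] [NormedSpace ℝ X]
  [NormedAddCommGroup Y] [NormedSpace ℝ Y] [NormedAddCommGroup Z] [NormedSpace ℝ Z]

/-- The weak `ℓ_p`-norm `sup_{‖x'‖ ≤ 1} (∑ |⟨x', x_i⟩|^p)^{1/p}` of a finite family. -/
def weakNorm (p : ℝ) {m : ℕ} (x : Fin m → X) : ℝ :=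
  sSup {c | ∃ φ : X →L[ℝ] ℝ, ‖φ‖ ≤ 1 ∧ c = (∑ i, |φ (x i)| ^ p) ^ (1 / p)}

/-- `T` is `(E,p)`-summing with constant `C`, where `E` is the sequence space with norm `ν`. -/
def SummingWith (ν : (ℕ → ℝ) → ℝ) (p : ℝ) (T : X →L[ℝ] Y) (C : ℝ) : Prop :=
  ∀ (m : ℕ) (x : Fin m → X),
    ν (fun n => if h : n < m then ‖T (x ⟨n, h⟩)‖ else 0) ≤ C * cPN ν p * weakNorm p x

/-- `T` is `(E,p)`-summing, where `E` is the sequence space with norm `ν`. -/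
def Summing (ν : (ℕ → ℝ) → ℝ) (p : ℝ) (T : X →L[ℝ] Y) : Prop :=
  ∃ C, 0 ≤ C ∧ SummingWith ν p T C

/-- The `(E,p)`-summing norm `π_{E,p}(T)`, where `E` is the sequence space with norm `ν`. -/
def piN (ν : (ℕ → ℝ) → ℝ) (p : ℝ) (T : X →L[ℝ] Y) : ℝ :=
  sInf {C | 0 ≤ C ∧ SummingWith ν p T C}

/-- The `k`-th approximation number (1-based). -/
def approxNum (T : X →L[ℝ] Y) (k : ℕ) : ℝ :=
  sInf {c | ∃ S : X →L[ℝ] Y,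
    Module.rank ℝ ↥(LinearMap.range (S : X →ₗ[ℝ] Y)) < (k : Cardinal) ∧ c = ‖T - S‖}

/-- The `k`-th Weyl number (1-based). -/
def weylNum (T : X →L[ℝ] Y) (k : ℕ) : ℝ :=
  sSup {c | ∃ S : lp (fun _ : ℕ => ℝ) 2 →L[ℝ] X, ‖S‖ ≤ 1 ∧ c = approxNum (T.comp S) k}

/-- The `k`-th Gelfand number (1-based). -/
def gelfandNum (T : X →L[ℝ] Y) (k : ℕ) : ℝ :=
  sInf {c | ∃ G : Submodule ℝ X, Module.rank ℝ (X ⧸ G) < (k : Cardinal) ∧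
    c = sSup {d | ∃ x ∈ G, ‖x‖ ≤ 1 ∧ d = ‖T x‖}}

end Operators

/-- Membership in the space of multipliers `M(E,F)`. -/
def mulMem (memE : (ℕ → ℝ) → Prop) (memF : (ℕ → ℝ) → Prop) (lam : ℕ → ℝ) : Prop :=
  ∀ y, memE y → memF (fun n => lam n * y n)

/-- The norm of the space of multipliers `M(E,F)`. -/
def mulNorm (memE : (ℕ → ℝ) → Prop) (nrmE : (ℕ → ℝ) → ℝ) (nrmF : (ℕ → ℝ) → ℝ)
    (lam : ℕ → ℝ) : ℝ :=
  sSup {c | ∃ y, memE y ∧ nrmE y ≤ 1 ∧ c = nrmF (fun n => lam n * y n)}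

/-- Membership in `M(ℓ₂, E)`. -/
def m2Mem (E : SeqSpace) : (ℕ → ℝ) → Prop := mulMem (Memlp 2) E.mem

/-- The norm of `M(ℓ₂, E)`. -/
def m2Norm (E : SeqSpace) : (ℕ → ℝ) → ℝ := mulNorm (Memlp 2) (lpNorm 2) E.nrm

/-- The dual norm of a linear functional with respect to the sequence space with
membership `memE` and norm `νE`. -/
def dualNormSeq (memE : (ℕ → ℝ) → Prop) (νE : (ℕ → ℝ) → ℝ) (φ : (ℕ → ℝ) →ₗ[ℝ] ℝ) : ℝ :=
  sSup {c | ∃ x, memE x ∧ νE x ≤ 1 ∧ c = |φ x|}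

/-- The weak `ℓ_p`-norm of a finite family in the sequence space `(memE, νE)`. -/
def weakNormSeq (p : ℝ) (memE : (ℕ → ℝ) → Prop) (νE : (ℕ → ℝ) → ℝ) {m : ℕ}
    (x : Fin m → ℕ → ℝ) : ℝ :=
  sSup {c | ∃ φ : (ℕ → ℝ) →ₗ[ℝ] ℝ, dualNormSeq memE νE φ ≤ 1 ∧
    c = (∑ i, |φ (x i)| ^ p) ^ (1 / p)}

/-- The inclusion map from the sequence space `(memE, νE)` into the sequence space with
norm `μ` is `(F,p)`-summing with constant `C`, where `F` has norm `νF`. -/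
def InclSummingWith (νF : (ℕ → ℝ) → ℝ) (p : ℝ) (memE : (ℕ → ℝ) → Prop)
    (νE : (ℕ → ℝ) → ℝ) (μ : (ℕ → ℝ) → ℝ) (C : ℝ) : Prop :=
  ∀ (m : ℕ) (x : Fin m → ℕ → ℝ), (∀ i, memE (x i)) →
    νF (fun n => if h : n < m then μ (x ⟨n, h⟩) else 0) ≤
      C * cPN νF p * weakNormSeq p memE νE x

/-- The inclusion map from the sequence space `(memE, νE)` into the sequence space with
norm `μ` is `(F,p)`-summing, where `F` has norm `νF`. -/
def InclSumming (νF : (ℕ → ℝ) → ℝ) (p : ℝ) (memE : (ℕ → ℝ) → Prop)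
    (νE : (ℕ → ℝ) → ℝ) (μ : (ℕ → ℝ) → ℝ) : Prop :=
  ∃ C, 0 ≤ C ∧ InclSummingWith νF p memE νE μ C

/-- Extension of a finite sequence by zeros. -/
def ext {n : ℕ} (x : Fin n → ℝ) : ℕ → ℝ := fun m => if h : m < n then x ⟨m, h⟩ else 0

/-- The norm of the finite section `E_n` of a sequence space `E`. -/
def finNrm (E : SeqSpace) (n : ℕ) (x : Fin n → ℝ) : ℝ := E.nrm (ext x)

/-- The euclidean norm on `ℝ^n`, i.e. the norm of `ℓ₂^n`. -/
def l2Fin {n : ℕ} (x : Fin n → ℝ) : ℝ := (∑ i, (x i) ^ 2) ^ ((1 : ℝ) / 2)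

/-- The operator norm of a linear map between finite-dimensional sequence spaces with
norms `ν` and `μ`. -/
def opNormFin {n m : ℕ} (ν : (Fin n → ℝ) → ℝ) (μ : (Fin m → ℝ) → ℝ)
    (T : (Fin n → ℝ) →ₗ[ℝ] (Fin m → ℝ)) : ℝ :=
  sSup {c | ∃ x, ν x ≤ 1 ∧ c = μ (T x)}

/-- The `k`-th approximation number (1-based) of a linear map between finite-dimensional
sequence spaces with norms `ν` and `μ`. -/
def approxFin {n m : ℕ} (ν : (Fin n → ℝ) → ℝ) (μ : (Fin m → ℝ) → ℝ)
    (T : (Fin n → ℝ) →ₗ[ℝ] (Fin m → ℝ)) (k : ℕ) : ℝ :=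
  sInf {c | ∃ S : (Fin n → ℝ) →ₗ[ℝ] (Fin m → ℝ),
    Module.rank ℝ ↥(LinearMap.range S) < (k : Cardinal) ∧ c = opNormFin ν μ (T - S)}

/-- Dual norm on functionals of a finite-dimensional sequence space with norm `ν`. -/
def dualNormFin {n : ℕ} (ν : (Fin n → ℝ) → ℝ) (φ : (Fin n → ℝ) →ₗ[ℝ] ℝ) : ℝ :=
  sSup {c | ∃ x, ν x ≤ 1 ∧ c = |φ x|}

/-- The weak `ℓ_p`-norm of a finite family in a finite-dimensional sequence space. -/
def weakNormFin (p : ℝ) {n : ℕ} (ν : (Fin n → ℝ) → ℝ) {m : ℕ} (x : Fin m → Fin n → ℝ) : ℝ :=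
  sSup {c | ∃ φ : (Fin n → ℝ) →ₗ[ℝ] ℝ, dualNormFin ν φ ≤ 1 ∧
    c = (∑ i, |φ (x i)| ^ p) ^ (1 / p)}

/-- `(F,p)`-summing property, with constant `C`, for a linear map between
finite-dimensional sequence spaces with norms `ν` and `μ`. -/
def SummingFinWith (νF : (ℕ → ℝ) → ℝ) (p : ℝ) {n m' : ℕ} (ν : (Fin n → ℝ) → ℝ)
    (μ : (Fin m' → ℝ) → ℝ) (T : (Fin n → ℝ) →ₗ[ℝ] (Fin m' → ℝ)) (C : ℝ) : Prop :=
  ∀ (m : ℕ) (x : Fin m → Fin n → ℝ),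
    νF (fun j => if h : j < m then μ (T (x ⟨j, h⟩)) else 0) ≤
      C * cPN νF p * weakNormFin p ν x

/-- The `(F,p)`-summing norm of a linear map between finite-dimensional sequence spaces. -/
def piNFin (νF : (ℕ → ℝ) → ℝ) (p : ℝ) {n m' : ℕ} (ν : (Fin n → ℝ) → ℝ)
    (μ : (Fin m' → ℝ) → ℝ) (T : (Fin n → ℝ) →ₗ[ℝ] (Fin m' → ℝ)) : ℝ :=
  sInf {C | 0 ≤ C ∧ SummingFinWith νF p ν μ T C}

/-- `T` maps the sequence space `(memA, νA)` boundedly into the sequence space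
`(memB, νB)`. -/
def BddBetween (memA : (ℕ → ℝ) → Prop) (νA : (ℕ → ℝ) → ℝ) (memB : (ℕ → ℝ) → Prop)
    (νB : (ℕ → ℝ) → ℝ) (T : (ℕ → ℝ) →ₗ[ℝ] (ℕ → ℝ)) : Prop :=
  (∀ x, memA x → memB (T x)) ∧ ∃ C, 0 ≤ C ∧ ∀ x, memA x → νB (T x) ≤ C * νA x

/-- Membership in the sum space `X₀ + X₁`. -/
def memSum (m₀ m₁ : (ℕ → ℝ) → Prop) (x : ℕ → ℝ) : Prop := ∃ a b, m₀ a ∧ m₁ b ∧ x = a + b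

/-- Membership in the intersection `X₀ ∩ X₁`. -/
def memInter (m₀ m₁ : (ℕ → ℝ) → Prop) (x : ℕ → ℝ) : Prop := m₀ x ∧ m₁ x

/-- The Peetre K-functional of the couple `((m₀,ν₀), (m₁,ν₁))`. -/
def Kfn (m₀ : (ℕ → ℝ) → Prop) (ν₀ : (ℕ → ℝ) → ℝ) (m₁ : (ℕ → ℝ) → Prop)
    (ν₁ : (ℕ → ℝ) → ℝ) (t : ℝ) (x : ℕ → ℝ) : ℝ :=
  sInf {c | ∃ a b, m₀ a ∧ m₁ b ∧ x = a + b ∧ c = ν₀ a + t * ν₁ b}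

/-- The norm of the sum space `X₀ + X₁`. -/
def sumNrm (m₀ : (ℕ → ℝ) → Prop) (ν₀ : (ℕ → ℝ) → ℝ) (m₁ : (ℕ → ℝ) → Prop)
    (ν₁ : (ℕ → ℝ) → ℝ) (x : ℕ → ℝ) : ℝ := Kfn m₀ ν₀ m₁ ν₁ 1 x

/-- The norm of the intersection `X₀ ∩ X₁`. -/
def interNrm (ν₀ ν₁ : (ℕ → ℝ) → ℝ) (x : ℕ → ℝ) : ℝ := max (ν₀ x) (ν₁ x)

/-- `(mX, νX)` is an interpolation space with respect to the couple
`((m₀,ν₀), (m₁,ν₁))`: it is intermediate and every operator bounded on both spaces of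
the couple is bounded on it. -/
def IsInterpSpace (m₀ : (ℕ → ℝ) → Prop) (ν₀ : (ℕ → ℝ) → ℝ) (m₁ : (ℕ → ℝ) → Prop)
    (ν₁ : (ℕ → ℝ) → ℝ) (mX : (ℕ → ℝ) → Prop) (νX : (ℕ → ℝ) → ℝ) : Prop :=
  BddBetween (memInter m₀ m₁) (interNrm ν₀ ν₁) mX νX LinearMap.id ∧
  BddBetween mX νX (memSum m₀ m₁) (sumNrm m₀ ν₀ m₁ ν₁) LinearMap.id ∧
  ∀ T : (ℕ → ℝ) →ₗ[ℝ] (ℕ → ℝ),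
    BddBetween m₀ ν₀ m₀ ν₀ T → BddBetween m₁ ν₁ m₁ ν₁ T → BddBetween mX νX mX νX T

/-- `((m₀,ν₀), (m₁,ν₁))` is a relative Calderón couple. -/
def CalderonCouple (m₀ : (ℕ → ℝ) → Prop) (ν₀ : (ℕ → ℝ) → ℝ) (m₁ : (ℕ → ℝ) → Prop)
    (ν₁ : (ℕ → ℝ) → ℝ) : Prop :=
  ∀ x y, memSum m₀ m₁ x → memSum m₀ m₁ y →
    (∀ t : ℝ, 0 < t → Kfn m₀ ν₀ m₁ ν₁ t y ≤ Kfn m₀ ν₀ m₁ ν₁ t x) →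
    ∃ T : (ℕ → ℝ) →ₗ[ℝ] (ℕ → ℝ),
      BddBetween m₀ ν₀ m₀ ν₀ T ∧ BddBetween m₁ ν₁ m₁ ν₁ T ∧ T x = y

/-- Membership in the `p`-th power `E^p` of a sequence space. -/
def powMem (memE : (ℕ → ℝ) → Prop) (p : ℝ) (x : ℕ → ℝ) : Prop :=
  memE fun n => |x n| ^ (1 / p)

/-- The norm of the `p`-th power `E^p` of a sequence space. -/
def powNrm (νE : (ℕ → ℝ) → ℝ) (p : ℝ) (x : ℕ → ℝ) : ℝ :=
  νE (fun n => |x n| ^ (1 / p)) ^ p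

/-- The `i`-th Rademacher function (1-based: this is `r_{i+1}`). -/
def rademacher (i : ℕ) (t : ℝ) : ℝ := (-1 : ℝ) ^ ⌊t * 2 ^ (i + 1)⌋

/-- A Banach space has cotype 2. -/
def CotypeTwo (X : Type*) [NormedAddCommGroup X] [NormedSpace ℝ X] : Prop :=
  ∃ C > 0, ∀ (n : ℕ) (x : Fin n → X),
    (∑ i, ‖x i‖ ^ 2) ^ ((1 : ℝ) / 2) ≤
      C * (∫ t in (0:ℝ)..1, ‖∑ i, rademacher i.val t • x i‖ ^ 2) ^ ((1 : ℝ) / 2)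

/-- A sequence space has cotype 2. -/
def SeqCotypeTwo (E : SeqSpace) : Prop :=
  ∃ C > 0, ∀ (n : ℕ) (x : Fin n → ℕ → ℝ), (∀ i, E.mem (x i)) →
    (∑ i, E.nrm (x i) ^ 2) ^ ((1 : ℝ) / 2) ≤
      C * (∫ t in (0:ℝ)..1, E.nrm (∑ i, rademacher i.val t • x i) ^ 2) ^ ((1 : ℝ) / 2)

/-- The inclusion of the sequence space `(memE, νE)` into the sequence space with norm
`μ` is strictly singular: there is no infinite-dimensional closed subspace on which the
inclusion is an isomorphism onto its image. -/
def InclStrictlySingular (memE : (ℕ → ℝ) → Prop) (νE : (ℕ → ℝ) → ℝ)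
    (μ : (ℕ → ℝ) → ℝ) : Prop :=
  ¬ ∃ Z : Submodule ℝ (ℕ → ℝ),
      (∀ x ∈ Z, memE x) ∧
      (¬ Module.Finite ℝ ↥Z) ∧
      (∀ f : ℕ → (ℕ → ℝ), (∀ k, f k ∈ Z) → ∀ g, memE g →
        (∀ ε : ℝ, 0 < ε → ∃ N, ∀ k ≥ N, νE (f k - g) < ε) → g ∈ Z) ∧
      ∃ c > 0, ∀ x ∈ Z, c * νE x ≤ μ x

/-- `E` coincides with `ℓ₂` up to an equivalent norm. -/
def EquivToL2 (E : SeqSpace) : Prop :=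
  (∀ x, E.mem x ↔ Memlp 2 x) ∧
  ∃ c > 0, ∃ C > 0, ∀ x, E.mem x → c * lpNorm 2 x ≤ E.nrm x ∧ E.nrm x ≤ C * lpNorm 2 x

/-- Convergence in the norm of the sequence space `E`. -/
def TendstoInNrm (E : SeqSpace) (s : ℕ → (ℕ → ℝ)) (g : ℕ → ℝ) : Prop :=
  ∀ ε : ℝ, 0 < ε → ∃ N, ∀ k ≥ N, E.nrm (s k - g) < ε

/-- The sequence `(x k)` of elements of `E` is unconditionally summable in `E`. -/
def UncondSummable (E : SeqSpace) (x : ℕ → (ℕ → ℝ)) : Prop :=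
  ∀ σ : Equiv.Perm ℕ, ∃ s, E.mem s ∧
    TendstoInNrm E (fun m => ∑ k ∈ Finset.range m, x (σ k)) s

/-- Membership in the Lorentz sequence space `ℓ_{p,q}`, `q < ∞`. -/
def memLorentz (p q : ℝ) (x : ℕ → ℝ) : Prop :=
  Summable fun n : ℕ => ((n : ℝ) + 1) ^ (q / p - 1) * decr x n ^ q

/-- The norm of the Lorentz sequence space `ℓ_{p,q}`, `q < ∞`. -/
def lorentzNorm (p q : ℝ) (x : ℕ → ℝ) : ℝ :=
  (∑' n : ℕ, ((n : ℝ) + 1) ^ (q / p - 1) * decr x n ^ q) ^ (1 / q)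

/-- Membership in the Lorentz sequence space `ℓ_{p,∞}`. -/
def memLorentzInf (p : ℝ) (x : ℕ → ℝ) : Prop :=
  ∃ C : ℝ, ∀ n : ℕ, ((n : ℝ) + 1) ^ (1 / p) * decr x n ≤ C

/-- The norm of the Lorentz sequence space `ℓ_{p,∞}`. -/
def lorentzInfNorm (p : ℝ) (x : ℕ → ℝ) : ℝ :=
  ⨆ n : ℕ, ((n : ℝ) + 1) ^ (1 / p) * decr x n

/-- The real sequence space `ℓ₂`. -/
abbrev L2 := lp (fun _ : ℕ => ℝ) 2

/-- The canonical complex structure on `ℓ₂ × ℓ₂`, `J(x,y) = (-y,x)`. -/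
def Jop : (L2 × L2) →L[ℝ] (L2 × L2) :=
  (-(ContinuousLinearMap.snd ℝ L2 L2)).prod (ContinuousLinearMap.fst ℝ L2 L2)

/-- The real operator on `ℓ₂ × ℓ₂` corresponding to `T_ℂ - μ` on the complexification
of `ℓ₂`, where `T_ℂ` is the complexification of `T`. -/
def complexBlock (T : L2 →L[ℝ] L2) (μ : ℂ) : (L2 × L2) →ₗ[ℝ] (L2 × L2) :=
  ((T.prodMap T) - μ.re • ContinuousLinearMap.id ℝ (L2 × L2) - μ.im • Jop).toLinearMap

/-- The algebraic multiplicity of `μ ≠ 0` as an eigenvalue of the complexification of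
`T`: half the real dimension of the generalized eigenspace of the corresponding real
operator on `ℓ₂ × ℓ₂`. -/
def genMult (T : L2 →L[ℝ] L2) (μ : ℂ) : ℕ :=
  Module.finrank ℝ ↥(⨆ k : ℕ, LinearMap.ker (complexBlock T μ ^ k)) / 2

/-- `lam` is an eigenvalue sequence of `T`: the moduli are non-increasing and every
nonzero `μ` occurs in `lam` exactly according to its algebraic multiplicity as an
eigenvalue of the complexification of `T`. -/
def IsEigenvalueSeq (T : L2 →L[ℝ] L2) (lam : ℕ → ℂ) : Prop :=
  Antitone (fun n => ‖lam n‖) ∧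
  ∀ μ : ℂ, μ ≠ 0 → Nat.card {n | lam n = μ} = genMult T μ


/-! ### Auxiliary lemmas -/

section AuxBasic

theorem SeqSpace.nrm_zero (E : SeqSpace) : E.nrm 0 = 0 := by
  have h := E.nrm_smul 0 0 E.zero_mem
  simpa using h

theorem SeqSpace.mem_single (E : SeqSpace) (t : ℝ) (n : ℕ) :
    E.mem (fun m => if m = n then t else 0) := by
  obtain ⟨x, hx, hx0⟩ := E.exists_full
  have h1 : E.mem (fun m => if m = n then x n else 0) :=
    (E.ideal _ x hx (fun m => by by_cases h : m = n <;> simp [h])).1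
  have h2 := E.smul_mem (t / x n) h1
  have h3 : (t / x n) • (fun m => if m = n then x n else 0) =
      (fun m => if m = n then t else 0) := by
    funext m
    simp only [Pi.smul_apply, smul_eq_mul, mul_ite, mul_zero]
    by_cases h : m = n
    · simp [h, div_mul_cancel₀ t (hx0 n)]
    · simp [h]
  rwa [h3] at h2

theorem SeqSpace.mem_e (E : SeqSpace) (n : ℕ) : E.mem (e n) :=
  E.mem_single 1 n

theorem SeqSpace.e0_pos (E : SeqSpace) : 0 < E.nrm (e 0) := by
  rcases lt_or_eq_of_le (E.nrm_nonneg (e 0)) with h | h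
  · exact h
  · exfalso
    have h0 := E.nrm_eq_zero (e 0) (E.mem_e 0) h.symm
    have h1 := congrFun h0 0
    simp [e] at h1

theorem SeqSpace.mem_finsetSum (E : SeqSpace) {ι : Type*} (s : Finset ι) (f : ι → ℕ → ℝ)
    (h : ∀ i ∈ s, E.mem (f i)) : E.mem (∑ i ∈ s, f i) :=
  Finset.sum_induction f E.mem (fun _ _ ha hb => E.add_mem ha hb) E.zero_mem h

theorem SeqSpace.nrm_finsetSum_le (E : SeqSpace) {ι : Type*} (s : Finset ι) (f : ι → ℕ → ℝ)
    (h : ∀ i ∈ s, E.mem (f i)) : E.nrm (∑ i ∈ s, f i) ≤ ∑ i ∈ s, E.nrm (f i) := by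
  classical
  induction s using Finset.induction_on with
  | empty => simp [E.nrm_zero]
  | insert a s hnot ih =>
    rw [Finset.sum_insert hnot, Finset.sum_insert hnot]
    calc E.nrm (f a + ∑ i ∈ s, f i) ≤ E.nrm (f a) + E.nrm (∑ i ∈ s, f i) :=
          E.nrm_triangle _ _ (h a (Finset.mem_insert_self a s))
            (E.mem_finsetSum s f fun i hi => h i (Finset.mem_insert_of_mem hi))
      _ ≤ E.nrm (f a) + ∑ i ∈ s, E.nrm (f i) := by
          have := ih (fun i hi => h i (Finset.mem_insert_of_mem hi))
          linarith

theorem finsupp_eq_sum_single (u : ℕ → ℝ) (k : ℕ) (hu : ∀ n, k ≤ n → u n = 0) :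
    u = ∑ n ∈ Finset.range k, (fun m => if m = n then u n else 0) := by
  funext m
  rw [Finset.sum_apply]
  rw [Finset.sum_ite_eq (Finset.range k) m u]
  by_cases h : m ∈ Finset.range k
  · simp [h]
  · simp only [h, if_false]
    exact hu m (by simpa using h)

theorem SeqSpace.mem_finsupp (E : SeqSpace) (u : ℕ → ℝ) (k : ℕ) (hu : ∀ n, k ≤ n → u n = 0) :
    E.mem u := by
  rw [finsupp_eq_sum_single u k hu]
  exact E.mem_finsetSum _ _ fun i _ => E.mem_single (u i) i

end AuxBasic

section AuxDecr

/-- The defining set of `decr`. -/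
def decrSet (x : ℕ → ℝ) (n : ℕ) : Set ℝ :=
  {a : ℝ | ∃ J : Finset ℕ, J.card ≤ n ∧ ∀ i ∉ J, |x i| ≤ a}

theorem decr_def (x : ℕ → ℝ) (n : ℕ) : decr x n = sInf (decrSet x n) := rfl

theorem decrSet_nonneg {x : ℕ → ℝ} {n : ℕ} {a : ℝ} (ha : a ∈ decrSet x n) : 0 ≤ a := by
  obtain ⟨J, _, hJ⟩ := ha
  obtain ⟨i, hi⟩ := Infinite.exists_notMem_finset J
  exact le_trans (abs_nonneg _) (hJ i hi)

theorem decrSet_bddBelow (x : ℕ → ℝ) (n : ℕ) : BddBelow (decrSet x n) :=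
  ⟨0, fun _ ha => decrSet_nonneg ha⟩

theorem decrSet_nonempty {x : ℕ → ℝ} (hx : ∃ M, ∀ i, |x i| ≤ M) (n : ℕ) :
    (decrSet x n).Nonempty := by
  obtain ⟨M, hM⟩ := hx
  exact ⟨M, ∅, by simp, fun i _ => hM i⟩

theorem decrSet_mono {x : ℕ → ℝ} {n m : ℕ} (h : n ≤ m) : decrSet x n ⊆ decrSet x m :=
  fun _ ⟨J, hJ, h2⟩ => ⟨J, le_trans hJ h, h2⟩

theorem decr_nonneg {x : ℕ → ℝ} (hx : ∃ M, ∀ i, |x i| ≤ M) (n : ℕ) : 0 ≤ decr x n :=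
  le_csInf (decrSet_nonempty hx n) fun _ ha => decrSet_nonneg ha

theorem decr_antitone {x : ℕ → ℝ} (hx : ∃ M, ∀ i, |x i| ≤ M) {n m : ℕ} (h : n ≤ m) :
    decr x m ≤ decr x n :=
  csInf_le_csInf (decrSet_bddBelow x m) (decrSet_nonempty hx n) (decrSet_mono h)

/-- If at least `n+1` indices carry `|x i| ≥ t` then `t ≤ decr x n`. -/
theorem le_decr {x : ℕ → ℝ} (hx : ∃ M, ∀ i, |x i| ≤ M) {n : ℕ} {t : ℝ} (A : Finset ℕ)
    (hcard : n < A.card) (ht : ∀ i ∈ A, t ≤ |x i|) : t ≤ decr x n := by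
  refine le_csInf (decrSet_nonempty hx n) fun a ⟨J, hJ, hJ2⟩ => ?_
  have : ¬ A ⊆ J := fun hsub => absurd (Finset.card_le_card hsub) (by omega)
  obtain ⟨i, hiA, hiJ⟩ := Finset.not_subset.mp this
  exact le_trans (ht i hiA) (hJ2 i hiJ)

/-- Greedy step: outside any finset of cardinality at most `k` there is an index with
`|x i| > decr x k - δ`. -/
theorem exists_notmem_gt_decr_sub {x : ℕ → ℝ} {δ : ℝ} (hδ : 0 < δ) (Jf : Finset ℕ) {k : ℕ}
    (hc : Jf.card ≤ k) : ∃ i, i ∉ Jf ∧ decr x k - δ < |x i| := by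
  by_contra hcon
  push_neg at hcon
  have hmem : decr x k - δ ∈ decrSet x k := ⟨Jf, hc, fun i hi => hcon i hi⟩
  have := csInf_le (decrSet_bddBelow x k) hmem
  rw [← decr_def] at this
  linarith

/-- The set of indices where `|x|` exceeds `decr x k` has at most `k` elements. -/
theorem card_gt_decr {x : ℕ → ℝ} (hx : ∃ M, ∀ i, |x i| ≤ M) (k : ℕ) :
    ∃ V : Finset ℕ, V.card ≤ k ∧ ∀ i, decr x k < |x i| → i ∈ V := by
  have claim : ∀ B : Finset ℕ, (∀ i ∈ B, decr x k < |x i|) → B.card ≤ k := by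
    intro B hB
    rcases B.eq_empty_or_nonempty with rfl | hne
    · simp
    obtain ⟨i0, hi0, hmin⟩ := Finset.exists_min_image B (fun i => |x i|) hne
    have hlt : decr x k < |x i0| := hB _ hi0
    rw [decr_def] at hlt
    obtain ⟨a, ⟨J, hJcard, hJ⟩, ha⟩ := exists_lt_of_csInf_lt (decrSet_nonempty hx k) hlt
    have hsub : B ⊆ J := by
      intro i hi
      by_contra hiJ
      have := hJ i hiJ
      have := hmin i hi
      linarith
    exact le_trans (Finset.card_le_card hsub) hJcard
  by_cases hfin : {i : ℕ | decr x k < |x i|}.Finite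
  · refine ⟨hfin.toFinset, claim _ (fun i hi => hfin.mem_toFinset.mp hi), fun i hi => ?_⟩
    exact hfin.mem_toFinset.mpr hi
  · exfalso
    obtain ⟨t, hts, htc⟩ := Set.Infinite.exists_subset_card_eq hfin (k + 1)
    have := claim t (fun i hi => hts hi)
    omega

/-- Any finite set of squares is dominated by the decreasing rearrangement. -/
theorem sum_sq_le_decr_sum {x : ℕ → ℝ} (hx : ∃ M, ∀ i, |x i| ≤ M) :
    ∀ (m : ℕ) (A : Finset ℕ), A.card = m →
      ∑ i ∈ A, x i ^ 2 ≤ ∑ l ∈ Finset.range m, decr x l ^ 2 := by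
  intro m
  induction m with
  | zero =>
    intro A hA
    rw [Finset.card_eq_zero.mp hA]
    simp
  | succ m ih =>
    intro A hA
    have hne : A.Nonempty := Finset.card_pos.mp (by omega)
    obtain ⟨i0, hi0, hmin⟩ := Finset.exists_min_image A (fun i => |x i|) hne
    have hcard : (A.erase i0).card = m := by
      rw [Finset.card_erase_of_mem hi0, hA]
      omega
    have h1 : ∑ i ∈ A.erase i0, x i ^ 2 + x i0 ^ 2 = ∑ i ∈ A, x i ^ 2 :=
      Finset.sum_erase_add A _ hi0
    have h2 : |x i0| ≤ decr x m := le_decr hx A (by omega) hmin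
    have h3 : x i0 ^ 2 ≤ decr x m ^ 2 := by
      rw [← sq_abs]
      exact pow_le_pow_left₀ (abs_nonneg _) h2 2
    have h4 := ih (A.erase i0) hcard
    rw [Finset.sum_range_succ]
    linarith

end AuxDecr

section AuxSingle

theorem decr_single (t : ℝ) (n : ℕ) :
    decr (fun m => if m = n then t else 0) = fun m => if m = 0 then |t| else 0 := by
  funext m
  rcases Nat.eq_zero_or_pos m with rfl | hm
  · have hset : decrSet (fun m => if m = n then t else 0) 0 = Set.Ici |t| := by
      ext a
      constructor
      · rintro ⟨J, hJ, hJ2⟩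
        rw [Nat.le_zero, Finset.card_eq_zero] at hJ
        have := hJ2 n (by simp [hJ])
        simpa using this
      · intro ha
        refine ⟨∅, by simp, fun i _ => ?_⟩
        by_cases h : i = n
        · simpa [h] using ha
        · simp only [h, if_false, abs_zero]
          exact le_trans (abs_nonneg t) ha
    rw [decr_def, hset, csInf_Ici]
    simp
  · have hset : decrSet (fun m => if m = n then t else 0) m = Set.Ici 0 := by
      ext a
      constructor
      · intro ha
        exact decrSet_nonneg ha
      · intro ha
        refine ⟨{n}, by simpa using Nat.succ_le_of_lt hm, fun i hi => ?_⟩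
        rw [Finset.mem_singleton] at hi
        simpa [hi] using ha
    rw [decr_def, hset, csInf_Ici]
    simp [hm.ne']

theorem SeqSpace.nrm_single (E : SeqSpace) (hsym : E.IsSymmetric) (t : ℝ) (n : ℕ) :
    E.nrm (fun m => if m = n then t else 0) = |t| * E.nrm (e 0) := by
  obtain ⟨hmem, heq⟩ := hsym _ (E.mem_single t n)
  rw [← heq, decr_single]
  have h2 : (fun m => if m = 0 then |t| else 0) = |t| • e 0 := by
    funext m; by_cases h : m = 0 <;> simp [e, h]
  rw [h2, E.nrm_smul _ _ (E.mem_e 0), abs_abs]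

theorem SeqSpace.abs_mul_le_nrm (E : SeqSpace) (hsym : E.IsSymmetric) {w : ℕ → ℝ}
    (hw : E.mem w) (n : ℕ) : |w n| * E.nrm (e 0) ≤ E.nrm w := by
  have h := (E.ideal (fun m => if m = n then w n else 0) w hw
    (fun m => by by_cases h : m = n <;> simp [h])).2
  rwa [E.nrm_single hsym] at h

theorem SeqSpace.bounded_of_mem (E : SeqSpace) (hsym : E.IsSymmetric) {w : ℕ → ℝ}
    (hw : E.mem w) : ∃ M, ∀ n, |w n| ≤ M := by
  refine ⟨E.nrm w / E.nrm (e 0), fun n => ?_⟩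
  rw [le_div_iff₀ E.e0_pos]
  exact E.abs_mul_le_nrm hsym hw n

end AuxSingle

section AuxTrunc

/-- Truncation to the first `k` coordinates. -/
def trunc (u : ℕ → ℝ) (k : ℕ) : ℕ → ℝ := fun n => if n < k then u n else 0

theorem trunc_apply_of_lt {u : ℕ → ℝ} {k n : ℕ} (h : n < k) : trunc u k n = u n := if_pos h

theorem trunc_eq_zero {u : ℕ → ℝ} {k n : ℕ} (h : k ≤ n) : trunc u k n = 0 :=
  if_neg (by omega)

theorem SeqSpace.mem_trunc (E : SeqSpace) (u : ℕ → ℝ) (k : ℕ) : E.mem (trunc u k) :=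
  E.mem_finsupp _ k fun _ hn => trunc_eq_zero hn

theorem abs_trunc_le {u : ℕ → ℝ} {k : ℕ} (n : ℕ) : |trunc u k n| ≤ |u n| := by
  unfold trunc
  by_cases h : n < k <;> simp [h]

theorem SeqSpace.nrm_trunc_le_sum (E : SeqSpace) (hsym : E.IsSymmetric) (u : ℕ → ℝ) (k : ℕ) :
    E.nrm (trunc u k) ≤ (∑ n ∈ Finset.range k, |u n|) * E.nrm (e 0) := by
  have heq : trunc u k = ∑ n ∈ Finset.range k, (fun m => if m = n then u n else 0) := by
    rw [finsupp_eq_sum_single (trunc u k) k fun _ hn => trunc_eq_zero hn]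
    refine Finset.sum_congr rfl fun n hn => ?_
    rw [trunc_apply_of_lt (Finset.mem_range.mp hn)]
  rw [heq]
  calc E.nrm (∑ n ∈ Finset.range k, (fun m => if m = n then u n else 0))
      ≤ ∑ n ∈ Finset.range k, E.nrm (fun m => if m = n then u n else 0) :=
        E.nrm_finsetSum_le _ _ fun n _ => E.mem_single (u n) n
    _ = ∑ n ∈ Finset.range k, |u n| * E.nrm (e 0) :=
        Finset.sum_congr rfl fun n _ => E.nrm_single hsym (u n) n
    _ = (∑ n ∈ Finset.range k, |u n|) * E.nrm (e 0) := by rw [Finset.sum_mul]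

/-- Maximality: uniform norm bounds on truncations give membership and the norm bound. -/
theorem SeqSpace.mem_of_trunc_le (E : SeqSpace) (hmax : E.IsMaximal) {u : ℕ → ℝ} {B : ℝ}
    (hB : 0 ≤ B) (h : ∀ k, E.nrm (trunc u k) ≤ B) : E.mem u ∧ E.nrm u ≤ B := by
  rcases eq_or_lt_of_le hB with hB0 | hB0
  · have hzero : ∀ k, trunc u k = 0 := by
      intro k
      refine E.nrm_eq_zero _ (E.mem_trunc u k) (le_antisymm ?_ (E.nrm_nonneg _))
      rw [hB0]; exact h k
    have hu : u = 0 := by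
      funext n
      have := congrFun (hzero (n + 1)) n
      rwa [trunc_apply_of_lt (by omega)] at this
    rw [hu]
    exact ⟨E.zero_mem, by rw [E.nrm_zero]; exact hB⟩
  · have hmem1 : ∀ k, E.mem (B⁻¹ • trunc u k) ∧ E.nrm (B⁻¹ • trunc u k) ≤ 1 := by
      intro k
      refine ⟨E.smul_mem _ (E.mem_trunc u k), ?_⟩
      rw [E.nrm_smul _ _ (E.mem_trunc u k), abs_of_pos (inv_pos.mpr hB0)]
      rw [inv_mul_le_iff₀ hB0, mul_one]
      exact h k
    have htend : ∀ n, Filter.Tendsto (fun k => (B⁻¹ • trunc u k) n)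
        Filter.atTop (nhds ((B⁻¹ • u) n)) := by
      intro n
      refine Filter.Tendsto.congr' ?_ tendsto_const_nhds
      filter_upwards [Filter.eventually_ge_atTop (n + 1)] with k hk
      simp only [Pi.smul_apply, smul_eq_mul]
      rw [trunc_apply_of_lt (by omega)]
    obtain ⟨hmem, hle⟩ := hmax _ hmem1 _ htend
    have huB : u = B • (B⁻¹ • u) := by
      rw [smul_smul, mul_inv_cancel₀ (ne_of_gt hB0), one_smul]
    constructor
    · rw [huB]; exact E.smul_mem _ hmem
    · rw [huB, E.nrm_smul _ _ hmem, abs_of_pos hB0]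
      calc B * E.nrm (B⁻¹ • u) ≤ B * 1 := by
            exact mul_le_mul_of_nonneg_left hle (le_of_lt hB0)
        _ = B := mul_one B

end AuxTrunc

section AuxLp

theorem abs_rpow_two (t : ℝ) : |t| ^ (2:ℝ) = t ^ 2 := by
  rw [show (2:ℝ) = ((2:ℕ):ℝ) by norm_num, Real.rpow_natCast, sq_abs]

theorem memlp_two_iff (x : ℕ → ℝ) : Memlp 2 x ↔ Summable (fun n => x n ^ 2) :=
  summable_congr fun n => abs_rpow_two (x n)

theorem lpNorm_two_eq_sqrt (x : ℕ → ℝ) : lpNorm 2 x = Real.sqrt (∑' n, x n ^ 2) := by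
  unfold lpNorm
  rw [tsum_congr fun n => abs_rpow_two (x n), Real.sqrt_eq_rpow]

theorem lpNorm_two_nonneg (x : ℕ → ℝ) : 0 ≤ lpNorm 2 x := by
  rw [lpNorm_two_eq_sqrt]; exact Real.sqrt_nonneg _

theorem lpNorm_two_sq (x : ℕ → ℝ) : lpNorm 2 x ^ 2 = ∑' n, x n ^ 2 := by
  rw [lpNorm_two_eq_sqrt]
  exact Real.sq_sqrt (tsum_nonneg fun n => sq_nonneg _)

theorem sum_sq_le_lpNorm_sq {x : ℕ → ℝ} (h : Memlp 2 x) (K : Finset ℕ) :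
    ∑ n ∈ K, x n ^ 2 ≤ lpNorm 2 x ^ 2 := by
  rw [lpNorm_two_sq]
  exact Summable.sum_le_tsum K (fun n _ => sq_nonneg _) ((memlp_two_iff x).mp h)

theorem abs_le_one_of_lpNorm_le_one {x : ℕ → ℝ} (h : Memlp 2 x) (h1 : lpNorm 2 x ≤ 1)
    (n : ℕ) : |x n| ≤ 1 := by
  rw [← sq_le_one_iff_abs_le_one]
  calc x n ^ 2 = ∑ m ∈ {n}, x m ^ 2 := by simp
    _ ≤ lpNorm 2 x ^ 2 := sum_sq_le_lpNorm_sq h {n}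
    _ ≤ 1 := pow_le_one₀ (lpNorm_two_nonneg x) h1

theorem memlp_two_finsupp {x : ℕ → ℝ} (K : Finset ℕ) (h : ∀ n ∉ K, x n = 0) : Memlp 2 x :=
  (memlp_two_iff x).mpr (summable_of_ne_finset_zero (s := K) fun n hn => by rw [h n hn]; ring)

theorem lpNorm_two_finsupp {x : ℕ → ℝ} (K : Finset ℕ) (h : ∀ n ∉ K, x n = 0) :
    lpNorm 2 x = Real.sqrt (∑ n ∈ K, x n ^ 2) := by
  rw [lpNorm_two_eq_sqrt, tsum_eq_sum (s := K) fun n hn => by rw [h n hn]; ring]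

theorem memlp_two_smul {x : ℕ → ℝ} (h : Memlp 2 x) (c : ℝ) : Memlp 2 (c • x) := by
  rw [memlp_two_iff]
  have : (fun n => (c • x) n ^ 2) = fun n => c ^ 2 * x n ^ 2 := by
    funext n; simp [mul_pow]
  rw [this]
  exact ((memlp_two_iff x).mp h).mul_left _

theorem lpNorm_two_smul (x : ℕ → ℝ) (c : ℝ) : lpNorm 2 (c • x) = |c| * lpNorm 2 x := by
  rw [lpNorm_two_eq_sqrt, lpNorm_two_eq_sqrt]
  have h1 : (fun n => (c • x) n ^ 2) = fun n => c ^ 2 * x n ^ 2 := by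
    funext n; simp [mul_pow]
  rw [show ∑' n, (c • x) n ^ 2 = ∑' n, c ^ 2 * x n ^ 2 by rw [h1], tsum_mul_left,
    Real.sqrt_mul (sq_nonneg c), Real.sqrt_sq_eq_abs]

theorem memlp_two_zero : Memlp 2 (0 : ℕ → ℝ) :=
  memlp_two_finsupp ∅ (fun _ _ => rfl)

theorem lpNorm_two_zero : lpNorm 2 (0 : ℕ → ℝ) = 0 := by
  rw [lpNorm_two_finsupp (x := (0 : ℕ → ℝ)) ∅ (fun _ _ => rfl)]
  simp

theorem eq_zero_of_lpNorm_two_eq_zero {x : ℕ → ℝ} (h : Memlp 2 x) (h0 : lpNorm 2 x = 0) :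
    x = 0 := by
  funext n
  have h1 : x n ^ 2 ≤ 0 := by
    calc x n ^ 2 = ∑ m ∈ {n}, x m ^ 2 := by simp
      _ ≤ lpNorm 2 x ^ 2 := sum_sq_le_lpNorm_sq h {n}
      _ = 0 := by rw [h0]; ring
  have := sq_nonneg (x n)
  have : x n ^ 2 = 0 := le_antisymm h1 this
  exact pow_eq_zero_iff (by norm_num) |>.mp this

theorem memlp_two_e (n : ℕ) : Memlp 2 (e n) :=
  memlp_two_finsupp {n} fun m hm => by
    rw [Finset.mem_singleton] at hm
    simp [e, hm]

theorem lpNorm_two_e (n : ℕ) : lpNorm 2 (e n) = 1 := by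
  rw [lpNorm_two_finsupp {n} (fun m hm => by
    rw [Finset.mem_singleton] at hm
    simp [e, hm])]
  simp [e]

/-- Cauchy–Schwarz for finite sums, absolute-value form. -/
theorem cs_abs (K : Finset ℕ) (a b : ℕ → ℝ) :
    ∑ n ∈ K, |a n * b n| ≤ Real.sqrt (∑ n ∈ K, a n ^ 2) * Real.sqrt (∑ n ∈ K, b n ^ 2) := by
  have h1 : (∑ n ∈ K, |a n| * |b n|) ^ 2 ≤ (∑ n ∈ K, |a n| ^ 2) * ∑ n ∈ K, |b n| ^ 2 :=
    Finset.sum_mul_sq_le_sq_mul_sq K _ _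
  rw [show ∑ n ∈ K, |a n| ^ 2 = ∑ n ∈ K, a n ^ 2 from Finset.sum_congr rfl fun n _ => sq_abs _,
    show ∑ n ∈ K, |b n| ^ 2 = ∑ n ∈ K, b n ^ 2 from Finset.sum_congr rfl fun n _ => sq_abs _]
    at h1
  have h2 : ∑ n ∈ K, |a n * b n| = ∑ n ∈ K, |a n| * |b n| :=
    Finset.sum_congr rfl fun n _ => abs_mul _ _
  rw [h2]
  have h3 : 0 ≤ ∑ n ∈ K, |a n| * |b n| :=
    Finset.sum_nonneg fun n _ => mul_nonneg (abs_nonneg _) (abs_nonneg _)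
  calc ∑ n ∈ K, |a n| * |b n| = Real.sqrt ((∑ n ∈ K, |a n| * |b n|) ^ 2) :=
        (Real.sqrt_sq h3).symm
    _ ≤ Real.sqrt ((∑ n ∈ K, a n ^ 2) * ∑ n ∈ K, b n ^ 2) := Real.sqrt_le_sqrt h1
    _ = _ := Real.sqrt_mul (Finset.sum_nonneg fun n _ => sq_nonneg _) _

/-- Finite ℓ₂ triangle inequality. -/
theorem sqrt_sum_sq_add_le (K : Finset ℕ) (u v : ℕ → ℝ) :
    Real.sqrt (∑ n ∈ K, (u n + v n) ^ 2) ≤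
      Real.sqrt (∑ n ∈ K, u n ^ 2) + Real.sqrt (∑ n ∈ K, v n ^ 2) := by
  set P := ∑ n ∈ K, u n ^ 2 with hP
  set Q := ∑ n ∈ K, v n ^ 2 with hQ
  have hP0 : 0 ≤ P := Finset.sum_nonneg fun n _ => sq_nonneg _
  have hQ0 : 0 ≤ Q := Finset.sum_nonneg fun n _ => sq_nonneg _
  have hcs : ∑ n ∈ K, u n * v n ≤ Real.sqrt P * Real.sqrt Q := by
    calc ∑ n ∈ K, u n * v n ≤ ∑ n ∈ K, |u n * v n| :=
          Finset.sum_le_sum fun n _ => le_abs_self _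
      _ ≤ _ := cs_abs K u v
  have hexp : ∑ n ∈ K, (u n + v n) ^ 2 = P + 2 * ∑ n ∈ K, u n * v n + Q := by
    rw [hP, hQ, Finset.mul_sum, ← Finset.sum_add_distrib, ← Finset.sum_add_distrib]
    exact Finset.sum_congr rfl fun n _ => by ring
  have hle : ∑ n ∈ K, (u n + v n) ^ 2 ≤ (Real.sqrt P + Real.sqrt Q) ^ 2 := by
    rw [hexp, add_sq, Real.sq_sqrt hP0, Real.sq_sqrt hQ0]
    nlinarith [hcs]
  calc Real.sqrt (∑ n ∈ K, (u n + v n) ^ 2) ≤ Real.sqrt ((Real.sqrt P + Real.sqrt Q) ^ 2) :=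
        Real.sqrt_le_sqrt hle
    _ = Real.sqrt P + Real.sqrt Q :=
        Real.sqrt_sq (by positivity)

end AuxLp

section AuxHB

/-- Type synonym for `Fin k → ℝ` carrying the norm inherited from `E`. -/
def FinSeq (_E : SeqSpace) (k : ℕ) := Fin k → ℝ

namespace FinSeq

variable {E : SeqSpace} {k : ℕ}

instance : AddCommGroup (FinSeq E k) := Pi.addCommGroup
instance : Module ℝ (FinSeq E k) := Pi.module _ _ _

/-- Extension by zero to a full sequence. -/
def toSeq (v : FinSeq E k) : ℕ → ℝ := fun n => if h : n < k then v ⟨n, h⟩ else 0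

theorem toSeq_vanish (v : FinSeq E k) {n : ℕ} (h : k ≤ n) : v.toSeq n = 0 :=
  dif_neg (by omega)

theorem toSeq_apply (v : FinSeq E k) {n : ℕ} (h : n < k) : v.toSeq n = v ⟨n, h⟩ := dif_pos h

theorem toSeq_zero : (0 : FinSeq E k).toSeq = 0 := by
  funext n
  by_cases h : n < k
  · rw [toSeq_apply _ h]; rfl
  · rw [toSeq_vanish _ (by omega)]; rfl

theorem toSeq_add (v w : FinSeq E k) : (v + w).toSeq = v.toSeq + w.toSeq := by
  funext n
  rw [Pi.add_apply]
  by_cases h : n < k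
  · rw [toSeq_apply _ h, toSeq_apply _ h, toSeq_apply _ h]; rfl
  · rw [toSeq_vanish _ (by omega), toSeq_vanish _ (by omega), toSeq_vanish _ (by omega)]
    norm_num

theorem toSeq_neg (v : FinSeq E k) : (-v).toSeq = (-1 : ℝ) • v.toSeq := by
  funext n
  rw [Pi.smul_apply, smul_eq_mul]
  by_cases h : n < k
  · rw [toSeq_apply _ h, toSeq_apply _ h]
    show -v ⟨n, h⟩ = -1 * v ⟨n, h⟩
    ring
  · rw [toSeq_vanish _ (by omega), toSeq_vanish _ (by omega)]
    norm_num

theorem mem_toSeq (v : FinSeq E k) : E.mem v.toSeq :=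
  E.mem_finsupp _ k fun _ hn => v.toSeq_vanish hn

theorem toSeq_inj {v : FinSeq E k} (h : v.toSeq = 0) : v = 0 := by
  funext i
  have := congrFun h (i : ℕ)
  rwa [toSeq_apply v i.isLt, Fin.eta] at this

noncomputable instance : NormedAddCommGroup (FinSeq E k) :=
  AddGroupNorm.toNormedAddCommGroup
    { toFun := fun v => E.nrm v.toSeq
      map_zero' := by
        show E.nrm (FinSeq.toSeq (0 : FinSeq E k)) = 0
        rw [toSeq_zero]; exact E.nrm_zero
      add_le' := fun v w => by
        show E.nrm ((v + w).toSeq) ≤ E.nrm v.toSeq + E.nrm w.toSeq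
        rw [toSeq_add]
        exact E.nrm_triangle _ _ v.mem_toSeq w.mem_toSeq
      neg' := fun v => by
        show E.nrm ((-v).toSeq) = E.nrm v.toSeq
        rw [toSeq_neg, E.nrm_smul _ _ v.mem_toSeq]
        simp
      eq_zero_of_map_eq_zero' := fun v h =>
        toSeq_inj (E.nrm_eq_zero _ v.mem_toSeq h) }

theorem norm_def (v : FinSeq E k) : ‖v‖ = E.nrm v.toSeq := rfl

theorem toSeq_smul (c : ℝ) (v : FinSeq E k) : (c • v).toSeq = c • v.toSeq := by
  funext n
  rw [Pi.smul_apply, smul_eq_mul]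
  by_cases h : n < k
  · rw [toSeq_apply _ h, toSeq_apply _ h]; rfl
  · rw [toSeq_vanish _ (by omega), toSeq_vanish _ (by omega)]
    norm_num

noncomputable instance : NormedSpace ℝ (FinSeq E k) where
  norm_smul_le c v := by
    rw [norm_def, toSeq_smul, E.nrm_smul _ _ v.mem_toSeq, norm_def, Real.norm_eq_abs]

/-- Coordinate functionals basis vectors. -/
def chi (i : Fin k) : FinSeq E k := fun j => if i = j then 1 else 0

theorem eq_sum_chi (y : FinSeq E k) : y = ∑ i : Fin k, y i • chi (E := E) i :=
  pi_eq_sum_univ y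

end FinSeq

/-- The norming set: finitely supported elements of the unit ball of the Köthe dual. -/
def Sset (E : SeqSpace) : Set (ℕ → ℝ) :=
  {x | (∃ k, ∀ n, k ≤ n → x n = 0) ∧
    ∀ w, E.mem w → ∀ K : Finset ℕ, ∑ n ∈ K, |w n * x n| ≤ E.nrm w}

theorem zero_mem_Sset (E : SeqSpace) : (0 : ℕ → ℝ) ∈ Sset E := by
  refine ⟨⟨0, fun n _ => rfl⟩, fun w hw K => ?_⟩
  simp [E.nrm_nonneg w]

theorem Sset_solid (E : SeqSpace) {x x' : ℕ → ℝ} (hx : x ∈ Sset E)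
    (hle : ∀ n, |x' n| ≤ |x n|) : x' ∈ Sset E := by
  obtain ⟨⟨k, hk⟩, hx2⟩ := hx
  refine ⟨⟨k, fun n hn => ?_⟩, fun w hw K => ?_⟩
  · have := hle n
    rw [hk n hn] at this
    simpa using this
  · refine le_trans (Finset.sum_le_sum fun n _ => ?_) (hx2 w hw K)
    rw [abs_mul, abs_mul]
    exact mul_le_mul_of_nonneg_left (hle n) (abs_nonneg _)

/-- Finite-dimensional Hahn–Banach: the norm of a finitely supported sequence is
attained against the norming set. -/
theorem SeqSpace.exists_norming (E : SeqSpace) (u : ℕ → ℝ) (k : ℕ)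
    (hu : ∀ n, k ≤ n → u n = 0) :
    ∃ x ∈ Sset E, E.nrm u ≤ ∑ n ∈ Finset.range k, |u n * x n| := by
  classical
  set v : FinSeq E k := fun i => u i with hv
  have hvu : v.toSeq = u := by
    funext n
    by_cases h : n < k
    · rw [v.toSeq_apply h]
    · rw [v.toSeq_vanish (by omega), hu n (by omega)]
  by_cases hv0 : v = 0
  · have hu0 : u = 0 := by rw [← hvu, hv0, FinSeq.toSeq_zero]
    refine ⟨0, zero_mem_Sset E, ?_⟩
    rw [hu0, E.nrm_zero]
    refine Finset.sum_nonneg fun n _ => abs_nonneg _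
  obtain ⟨g, hg1, hg2⟩ := exists_dual_vector ℝ v (norm_ne_zero_iff.mpr hv0)
  set x : ℕ → ℝ := fun n => if h : n < k then g (FinSeq.chi ⟨n, h⟩) else 0 with hxdef
  have hx_apply : ∀ i : Fin k, x (i : ℕ) = g (FinSeq.chi i) := by
    intro i
    simp only [hxdef, i.isLt, dif_pos, Fin.eta]
  have hg_sum : ∀ y : FinSeq E k, g y = ∑ i : Fin k, y i * x (i : ℕ) := by
    intro y
    conv_lhs => rw [FinSeq.eq_sum_chi y]
    rw [map_sum]
    exact Finset.sum_congr rfl fun i _ => by rw [map_smul, smul_eq_mul, hx_apply i]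
  have hx_vanish : ∀ n, k ≤ n → x n = 0 := fun n hn => dif_neg (by omega)
  have claimA : ∀ w, E.mem w → ∀ K : Finset ℕ, ∑ n ∈ K, |w n * x n| ≤ E.nrm w := by
    intro w hw K
    have step1 : ∑ n ∈ K, |w n * x n| ≤ ∑ n ∈ Finset.range k, |w n * x n| := by
      rw [← Finset.sum_filter_of_ne (s := K) (p := fun n => n < k)
        (fun n _ hne => by
          by_contra hnk
          rw [hx_vanish n (by omega), mul_zero, abs_zero] at hne
          exact hne rfl)]
      refine Finset.sum_le_sum_of_subset_of_nonneg ?_ fun n _ _ => abs_nonneg _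
      intro n hn
      rw [Finset.mem_filter] at hn
      exact Finset.mem_range.mpr hn.2
    set y : FinSeq E k := fun i => if 0 ≤ w (i : ℕ) * x (i : ℕ) then w (i : ℕ) else -(w (i : ℕ))
      with hydef
    have hy_eval : ∀ i : Fin k, y i * x (i : ℕ) = |w (i : ℕ) * x (i : ℕ)| := by
      intro i
      by_cases h : 0 ≤ w (i : ℕ) * x (i : ℕ)
      · rw [hydef]; simp only [h, if_true]; rw [abs_of_nonneg h]
      · rw [hydef]; simp only [h, if_false]
        rw [abs_of_neg (by linarith [lt_of_not_ge h])]
        ring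
    have step2 : ∑ n ∈ Finset.range k, |w n * x n| = g y := by
      rw [hg_sum y, ← Fin.sum_univ_eq_sum_range (fun n => |w n * x n|) k]
      exact Finset.sum_congr rfl fun i _ => (hy_eval i).symm
    have step3 : g y ≤ E.nrm w := by
      calc g y ≤ |g y| := le_abs_self _
        _ ≤ ‖g‖ * ‖y‖ := by
            rw [← Real.norm_eq_abs]
            exact g.le_opNorm y
        _ = ‖y‖ := by rw [hg1, one_mul]
        _ ≤ E.nrm w := by
            rw [FinSeq.norm_def]
            refine (E.ideal _ w hw fun n => ?_).2
            by_cases h : n < k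
            · rw [y.toSeq_apply h]
              have : |y ⟨n, h⟩| = |w n| := by
                rw [hydef]
                by_cases h2 : 0 ≤ w n * x n <;> simp [h2, abs_neg]
              rw [this]
            · rw [y.toSeq_vanish (by omega)]
              simp
    exact le_trans step1 (by rw [step2]; exact step3)
  refine ⟨x, ⟨⟨k, hx_vanish⟩, claimA⟩, ?_⟩
  have hnu : E.nrm u = g v := by
    rw [hg2]
    simp [FinSeq.norm_def, hvu]
  rw [hnu, hg_sum v]
  calc ∑ i : Fin k, v i * x (i : ℕ) ≤ ∑ i : Fin k, |v i * x (i : ℕ)| :=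
        Finset.sum_le_sum fun i _ => le_abs_self _
    _ = ∑ n ∈ Finset.range k, |u n * x n| := by
        rw [← Fin.sum_univ_eq_sum_range (fun n => |u n * x n|) k]
  
end AuxHB

section AuxMult

theorem m2Mem_def {E : SeqSpace} {lam : ℕ → ℝ} :
    m2Mem E lam ↔ ∀ y, Memlp 2 y → E.mem (fun n => lam n * y n) := Iff.rfl

theorem m2Norm_def (E : SeqSpace) (lam : ℕ → ℝ) :
    m2Norm E lam =
      sSup {c | ∃ y, Memlp 2 y ∧ lpNorm 2 y ≤ 1 ∧ c = E.nrm (fun n => lam n * y n)} := rfl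

theorem m2Norm_nonneg (E : SeqSpace) (lam : ℕ → ℝ) : 0 ≤ m2Norm E lam :=
  Real.sSup_nonneg fun c ⟨_, _, _, hc⟩ => hc ▸ E.nrm_nonneg _

/-- The set defining `m2Norm lam` is bounded above whenever `lam ∈ M(ℓ₂,E)`. -/
theorem m2set_bddAbove (E : SeqSpace) {lam : ℕ → ℝ} (hlam : m2Mem E lam) :
    BddAbove {c | ∃ y, Memlp 2 y ∧ lpNorm 2 y ≤ 1 ∧ c = E.nrm (fun n => lam n * y n)} := by
  by_contra hb
  rw [not_bddAbove_iff] at hb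
  have hchoice : ∀ k : ℕ, ∃ y, Memlp 2 y ∧ lpNorm 2 y ≤ 1 ∧
      (4:ℝ) ^ k < E.nrm (fun n => lam n * y n) := by
    intro k
    obtain ⟨c, ⟨y, hy, hy1, rfl⟩, hc⟩ := hb ((4:ℝ) ^ k)
    exact ⟨y, hy, hy1, hc⟩
  choose y hy hy1 hyv using hchoice
  have habs : ∀ k n, |y k n| ≤ 1 := fun k n => abs_le_one_of_lpNorm_le_one (hy k) (hy1 k) n
  have hsq : ∀ k n, y k n ^ 2 ≤ 1 := fun k n => by
    have h := habs k n
    nlinarith [sq_abs (y k n), abs_nonneg (y k n)]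
  have hsummn : ∀ n, Summable (fun k : ℕ => (1/2 : ℝ) ^ k * |y k n|) := by
    intro n
    refine Summable.of_nonneg_of_le
      (fun k => mul_nonneg (by positivity) (abs_nonneg _)) (fun k => ?_) summable_geometric_two
    calc (1/2 : ℝ) ^ k * |y k n| ≤ (1/2 : ℝ) ^ k * 1 :=
          mul_le_mul_of_nonneg_left (habs k n) (by positivity)
      _ = (1/2 : ℝ) ^ k := mul_one _
  have hsummsq : ∀ n, Summable (fun k : ℕ => (1/2 : ℝ) ^ k * y k n ^ 2) := by
    intro n
    refine Summable.of_nonneg_of_le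
      (fun k => mul_nonneg (by positivity) (sq_nonneg _)) (fun k => ?_) summable_geometric_two
    calc (1/2 : ℝ) ^ k * y k n ^ 2 ≤ (1/2 : ℝ) ^ k * 1 :=
          mul_le_mul_of_nonneg_left (hsq k n) (by positivity)
      _ = (1/2 : ℝ) ^ k := mul_one _
  set Y : ℕ → ℝ := fun n => ∑' k, (1/2 : ℝ) ^ k * |y k n| with hYdef
  set Z : ℕ → ℝ := fun n => ∑' k, (1/2 : ℝ) ^ k * y k n ^ 2 with hZdef
  have hZ0 : ∀ n, 0 ≤ Z n := fun n =>
    tsum_nonneg fun k => mul_nonneg (by positivity) (sq_nonneg _)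
  have hY0 : ∀ n, 0 ≤ Y n := fun n =>
    tsum_nonneg fun k => mul_nonneg (by positivity) (abs_nonneg _)
  have hYZ : ∀ n, Y n ≤ Real.sqrt 2 * Real.sqrt (Z n) := by
    intro n
    refine Summable.tsum_le_of_sum_le (hsummn n) fun F => ?_
    have hterm : ∀ k ∈ F, (1/2 : ℝ) ^ k * |y k n| =
        |Real.sqrt ((1/2 : ℝ) ^ k) * (Real.sqrt ((1/2 : ℝ) ^ k) * |y k n|)| := by
      intro k _
      rw [abs_of_nonneg (mul_nonneg (Real.sqrt_nonneg _)
        (mul_nonneg (Real.sqrt_nonneg _) (abs_nonneg _))), ← mul_assoc,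
        Real.mul_self_sqrt (by positivity : (0:ℝ) ≤ (1/2:ℝ)^k)]
    rw [Finset.sum_congr rfl hterm]
    refine le_trans (cs_abs F _ _) ?_
    have h1 : ∑ k ∈ F, Real.sqrt ((1/2 : ℝ) ^ k) ^ 2 ≤ 2 := by
      have : ∀ k ∈ F, Real.sqrt ((1/2 : ℝ) ^ k) ^ 2 = (1/2 : ℝ) ^ k := fun k _ =>
        Real.sq_sqrt (by positivity)
      rw [Finset.sum_congr rfl this]
      calc ∑ k ∈ F, (1/2:ℝ)^k ≤ ∑' k, (1/2:ℝ)^k :=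
            Summable.sum_le_tsum F (fun k _ => by positivity) summable_geometric_two
        _ = 2 := tsum_geometric_two
    have h2 : ∑ k ∈ F, (Real.sqrt ((1/2 : ℝ) ^ k) * |y k n|) ^ 2 ≤ Z n := by
      have : ∀ k ∈ F, (Real.sqrt ((1/2 : ℝ) ^ k) * |y k n|) ^ 2 = (1/2:ℝ)^k * y k n ^ 2 := by
        intro k _
        rw [mul_pow, Real.sq_sqrt (by positivity : (0:ℝ) ≤ (1/2:ℝ)^k), sq_abs]
      rw [Finset.sum_congr rfl this]
      exact Summable.sum_le_tsum F (fun k _ => mul_nonneg (by positivity) (sq_nonneg _)) (hsummsq n)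
    exact mul_le_mul (Real.sqrt_le_sqrt h1) (Real.sqrt_le_sqrt h2)
      (Real.sqrt_nonneg _) (Real.sqrt_nonneg _)
  have hYsq : ∀ n, Y n ^ 2 ≤ 2 * Z n := by
    intro n
    calc Y n ^ 2 ≤ (Real.sqrt 2 * Real.sqrt (Z n)) ^ 2 :=
          pow_le_pow_left₀ (hY0 n) (hYZ n) 2
      _ = 2 * Z n := by
          rw [mul_pow, Real.sq_sqrt (by norm_num : (0:ℝ) ≤ 2), Real.sq_sqrt (hZ0 n)]
  have hpartial : ∀ K : Finset ℕ, ∑ n ∈ K, Y n ^ 2 ≤ 4 := by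
    intro K
    have h1 : ∑ n ∈ K, Y n ^ 2 ≤ 2 * ∑ n ∈ K, Z n := by
      rw [Finset.mul_sum]
      exact Finset.sum_le_sum fun n _ => hYsq n
    have h2 : ∑ n ∈ K, Z n = ∑' k, ∑ n ∈ K, (1/2 : ℝ) ^ k * y k n ^ 2 := by
      rw [hZdef]
      exact (Summable.tsum_finsetSum fun n _ => hsummsq n).symm
    have h3 : ∀ k : ℕ, ∑ n ∈ K, (1/2 : ℝ) ^ k * y k n ^ 2 ≤ (1/2:ℝ)^k := by
      intro k
      rw [← Finset.mul_sum]
      calc (1/2:ℝ)^k * ∑ n ∈ K, y k n ^ 2 ≤ (1/2:ℝ)^k * 1 := by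
            refine mul_le_mul_of_nonneg_left ?_ (by positivity)
            calc ∑ n ∈ K, y k n ^ 2 ≤ lpNorm 2 (y k) ^ 2 := sum_sq_le_lpNorm_sq (hy k) K
              _ ≤ 1 := pow_le_one₀ (lpNorm_two_nonneg _) (hy1 k)
        _ = (1/2:ℝ)^k := mul_one _
    have h4 : Summable fun k : ℕ => ∑ n ∈ K, (1/2 : ℝ) ^ k * y k n ^ 2 := by
      refine Summable.of_nonneg_of_le
        (fun k => Finset.sum_nonneg fun n _ => mul_nonneg (by positivity) (sq_nonneg _))
        h3 summable_geometric_two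
    calc ∑ n ∈ K, Y n ^ 2 ≤ 2 * ∑ n ∈ K, Z n := h1
      _ = 2 * ∑' k, ∑ n ∈ K, (1/2 : ℝ) ^ k * y k n ^ 2 := by rw [h2]
      _ ≤ 2 * ∑' k, (1/2:ℝ)^k := by
          refine mul_le_mul_of_nonneg_left (Summable.tsum_le_tsum h3 h4 summable_geometric_two)
            (by norm_num)
      _ = 4 := by rw [tsum_geometric_two]; norm_num
  have hYlp : Memlp 2 Y := by
    rw [memlp_two_iff]
    exact summable_of_sum_range_le (fun n => sq_nonneg _) fun n => hpartial (Finset.range n)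
  have hmemY : E.mem (fun n => lam n * Y n) := hlam Y hYlp
  set R := E.nrm (fun n => lam n * Y n) with hRdef
  have hbound : ∀ k, E.nrm (fun n => lam n * y k n) ≤ 2 ^ k * R := by
    intro k
    have hdom : ∀ n, |((1/2:ℝ)^k • fun n => lam n * y k n) n| ≤ |lam n * Y n| := by
      intro n
      rw [Pi.smul_apply, smul_eq_mul, abs_mul, abs_mul, abs_mul,
        abs_of_nonneg (by positivity : (0:ℝ) ≤ (1/2:ℝ)^k), abs_of_nonneg (hY0 n)]
      rw [← mul_assoc, mul_comm ((1/2:ℝ)^k) |lam n|, mul_assoc]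
      refine mul_le_mul_of_nonneg_left ?_ (abs_nonneg _)
      exact Summable.le_tsum (hsummn n) k fun j _ => mul_nonneg (by positivity) (abs_nonneg _)
    have hid := E.ideal _ _ hmemY hdom
    have heq : E.nrm ((1/2:ℝ)^k • fun n => lam n * y k n) =
        (1/2:ℝ)^k * E.nrm (fun n => lam n * y k n) := by
      rw [E.nrm_smul _ _ (hlam (y k) (hy k)), abs_of_nonneg (by positivity : (0:ℝ) ≤ (1/2:ℝ)^k)]
    rw [heq] at hid
    have h2k : (1/2:ℝ)^k = ((2:ℝ)^k)⁻¹ := by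
      rw [div_pow, one_pow, one_div]
    rw [h2k] at hid
    rw [← inv_mul_le_iff₀ (by positivity : (0:ℝ) < (2:ℝ)^k)]
    exact hid.2
  have hcontra : ∀ k : ℕ, (2:ℝ) ^ k < R := by
    intro k
    have h1 := hyv k
    have h2 := hbound k
    have h4 : (4:ℝ)^k = 2^k * 2^k := by
      rw [← mul_pow]; norm_num
    have h5 : (2:ℝ)^k * 2^k < 2^k * R := by
      rw [← h4]
      exact lt_of_lt_of_le h1 h2
    exact lt_of_mul_lt_mul_left h5 (by positivity)
  obtain ⟨k, hk⟩ := pow_unbounded_of_one_lt R (by norm_num : (1:ℝ) < 2)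
  exact absurd (hcontra k) (not_lt.mpr (le_of_lt hk))

theorem le_m2Norm (E : SeqSpace) {lam : ℕ → ℝ} (hlam : m2Mem E lam) {y : ℕ → ℝ}
    (hy : Memlp 2 y) (hy1 : lpNorm 2 y ≤ 1) :
    E.nrm (fun n => lam n * y n) ≤ m2Norm E lam :=
  le_csSup (m2set_bddAbove E hlam) ⟨y, hy, hy1, rfl⟩

/-- Evaluation estimate: finite weighted ℓ₂ sums of a multiplier against `Sset`
elements are controlled by the multiplier norm. -/
theorem eval_le (E : SeqSpace) {lam : ℕ → ℝ} (hlam : m2Mem E lam) {x : ℕ → ℝ}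
    (hx : x ∈ Sset E) (K : Finset ℕ) :
    ∑ n ∈ K, lam n ^ 2 * x n ^ 2 ≤ m2Norm E lam ^ 2 := by
  classical
  set t2 := ∑ n ∈ K, lam n ^ 2 * x n ^ 2 with ht2def
  have ht2 : 0 ≤ t2 := Finset.sum_nonneg fun n _ => mul_nonneg (sq_nonneg _) (sq_nonneg _)
  rcases eq_or_lt_of_le ht2 with h0 | hpos
  · rw [← h0]
    exact sq_nonneg _
  set t := Real.sqrt t2 with htdef
  have htpos : 0 < t := Real.sqrt_pos.mpr hpos
  have htsq : t ^ 2 = t2 := Real.sq_sqrt ht2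
  set y' : ℕ → ℝ := fun n => if n ∈ K then lam n * x n / t else 0 with hy'def
  have hy'lp : Memlp 2 y' := memlp_two_finsupp K fun n hn => by simp [hy'def, hn]
  have hy'sum : ∑ n ∈ K, y' n ^ 2 = 1 := by
    have : ∀ n ∈ K, y' n ^ 2 = lam n ^ 2 * x n ^ 2 / t ^ 2 := by
      intro n hn
      rw [hy'def]
      simp only [hn, if_true]
      rw [div_pow, mul_pow]
    rw [Finset.sum_congr rfl this, ← Finset.sum_div, htsq, ← ht2def, div_self (ne_of_gt hpos)]
  have hy'1 : lpNorm 2 y' ≤ 1 := by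
    rw [lpNorm_two_finsupp K fun n hn => by simp [hy'def, hn], hy'sum, Real.sqrt_one]
  have hmemw : E.mem (fun n => lam n * y' n) := hlam y' hy'lp
  have hsum_t : ∑ n ∈ K, |(fun n => lam n * y' n) n * x n| = t := by
    have : ∀ n ∈ K, |(fun n => lam n * y' n) n * x n| = lam n ^ 2 * x n ^ 2 / t := by
      intro n hn
      simp only [hy'def, hn, if_true]
      rw [abs_of_nonneg]
      · ring
      · have : lam n * (lam n * x n / t) * x n = lam n ^ 2 * x n ^ 2 / t := by ring
        rw [this]
        positivity
    rw [Finset.sum_congr rfl this, ← Finset.sum_div, ← ht2def,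
      div_eq_iff (ne_of_gt htpos)]
    exact (Real.mul_self_sqrt ht2).symm
  have hSx := hx.2 _ hmemw K
  rw [hsum_t] at hSx
  have ht_le : t ≤ m2Norm E lam := le_trans hSx (le_m2Norm E hlam hy'lp hy'1)
  calc t2 = t ^ 2 := htsq.symm
    _ ≤ m2Norm E lam ^ 2 := pow_le_pow_left₀ htpos.le ht_le 2

end AuxMult

section AuxCore

/-- Core estimate: a uniform bound on weighted finite ℓ₂ sums against the norming set
yields membership in `M(ℓ₂,E)` together with a norm bound. -/
theorem core (E : SeqSpace) (hmax : E.IsMaximal) (μ : ℕ → ℝ) (B : ℝ) (hB : 0 ≤ B)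
    (h : ∀ x ∈ Sset E, ∀ K : Finset ℕ, ∑ n ∈ K, μ n ^ 2 * x n ^ 2 ≤ B ^ 2) :
    m2Mem E μ ∧ m2Norm E μ ≤ B := by
  have main : ∀ y, Memlp 2 y → lpNorm 2 y ≤ 1 →
      E.mem (fun n => μ n * y n) ∧ E.nrm (fun n => μ n * y n) ≤ B := by
    intro y hy hy1
    refine E.mem_of_trunc_le hmax hB ?_
    intro k
    obtain ⟨x, hxS, hnx⟩ := E.exists_norming (trunc (fun n => μ n * y n) k) k
      (fun n hn => trunc_eq_zero hn)
    refine le_trans hnx ?_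
    have h1 : ∀ n ∈ Finset.range k,
        |trunc (fun n => μ n * y n) k n * x n| = |(μ n * x n) * y n| := by
      intro n hn
      rw [trunc_apply_of_lt (Finset.mem_range.mp hn)]
      congr 1
      ring
    rw [Finset.sum_congr rfl h1]
    refine le_trans (cs_abs (Finset.range k) (fun n => μ n * x n) y) ?_
    have h2 : Real.sqrt (∑ n ∈ Finset.range k, (μ n * x n) ^ 2) ≤ B := by
      have h3 : ∑ n ∈ Finset.range k, (μ n * x n) ^ 2 ≤ B ^ 2 := by
        have := h x hxS (Finset.range k)
        refine le_trans (le_of_eq (Finset.sum_congr rfl fun n _ => by ring)) this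
      calc Real.sqrt (∑ n ∈ Finset.range k, (μ n * x n) ^ 2) ≤ Real.sqrt (B ^ 2) :=
            Real.sqrt_le_sqrt h3
        _ = B := Real.sqrt_sq hB
    have h4 : Real.sqrt (∑ n ∈ Finset.range k, y n ^ 2) ≤ 1 := by
      calc Real.sqrt (∑ n ∈ Finset.range k, y n ^ 2) ≤ Real.sqrt (lpNorm 2 y ^ 2) :=
            Real.sqrt_le_sqrt (sum_sq_le_lpNorm_sq hy _)
        _ = lpNorm 2 y := Real.sqrt_sq (lpNorm_two_nonneg y)
        _ ≤ 1 := hy1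
    calc Real.sqrt (∑ n ∈ Finset.range k, (μ n * x n) ^ 2) *
          Real.sqrt (∑ n ∈ Finset.range k, y n ^ 2) ≤ B * 1 :=
          mul_le_mul h2 h4 (Real.sqrt_nonneg _) hB
      _ = B := mul_one B
  constructor
  · intro y hy
    by_cases h0 : lpNorm 2 y = 0
    · have hy0 : y = 0 := eq_zero_of_lpNorm_two_eq_zero hy h0
      have : (fun n => μ n * y n) = 0 := by
        funext n
        rw [hy0]
        simp
      rw [this]
      exact E.zero_mem
    · have ht : 0 < lpNorm 2 y := lt_of_le_of_ne (lpNorm_two_nonneg y) (Ne.symm h0)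
      set t := lpNorm 2 y with htdef
      have hsc : lpNorm 2 (t⁻¹ • y) ≤ 1 := by
        rw [lpNorm_two_smul, abs_of_pos (inv_pos.mpr ht), inv_mul_cancel₀ (ne_of_gt ht)]
      obtain ⟨hmem, _⟩ := main (t⁻¹ • y) (memlp_two_smul hy _) hsc
      have heq : (fun n => μ n * y n) = t • (fun n => μ n * (t⁻¹ • y) n) := by
        funext n
        simp only [Pi.smul_apply, smul_eq_mul]
        field_simp
      rw [heq]
      exact E.smul_mem _ hmem
  · refine Real.sSup_le ?_ hB
    rintro c ⟨y, hy, hy1, rfl⟩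
    exact (main y hy hy1).2

end AuxCore

section AuxClauses

/-- ℓ¹ embeds into `E`. -/
theorem SeqSpace.mem_of_summable (E : SeqSpace) (hmax : E.IsMaximal) (hsym : E.IsSymmetric)
    {u : ℕ → ℝ} (hu : Summable fun n => |u n|) :
    E.mem u ∧ E.nrm u ≤ (∑' n, |u n|) * E.nrm (e 0) := by
  refine E.mem_of_trunc_le hmax
    (mul_nonneg (tsum_nonneg fun n => abs_nonneg _) (E.nrm_nonneg _)) ?_
  intro k
  refine le_trans (E.nrm_trunc_le_sum hsym u k) ?_
  refine mul_le_mul_of_nonneg_right ?_ (E.nrm_nonneg _)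
  exact Summable.sum_le_tsum _ (fun n _ => abs_nonneg _) hu

/-- Clause 1: `ℓ₂ ∩ ℓ_∞ ⊆ M(ℓ₂,E)` boundedly. -/
theorem clause1 (E : SeqSpace) (hmax : E.IsMaximal) (hsym : E.IsSymmetric) :
    BddBetween (memInter (Memlp 2) MemLinf) (interNrm (lpNorm 2) linfNorm)
      (m2Mem E) (m2Norm E) LinearMap.id := by
  have hprod : ∀ x y : ℕ → ℝ, Memlp 2 x → Memlp 2 y →
      Summable fun n => |x n * y n| := by
    intro x y hx hy
    refine Summable.of_nonneg_of_le (fun n => abs_nonneg _) (fun n => ?_)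
      ((((memlp_two_iff x).mp hx).add ((memlp_two_iff y).mp hy)).mul_left (1/2 : ℝ))
    rw [abs_mul]
    nlinarith [abs_nonneg (x n), abs_nonneg (y n), sq_abs (x n), sq_abs (y n),
      sq_nonneg (|x n| - |y n|)]
  have hCS : ∀ x y : ℕ → ℝ, Memlp 2 x → Memlp 2 y →
      (∑' n, |x n * y n|) ≤ lpNorm 2 x * lpNorm 2 y := by
    intro x y hx hy
    refine Summable.tsum_le_of_sum_le (hprod x y hx hy) fun K => ?_
    refine le_trans (cs_abs K x y) ?_
    have h1 : Real.sqrt (∑ n ∈ K, x n ^ 2) ≤ lpNorm 2 x := by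
      calc Real.sqrt (∑ n ∈ K, x n ^ 2) ≤ Real.sqrt (lpNorm 2 x ^ 2) :=
            Real.sqrt_le_sqrt (sum_sq_le_lpNorm_sq hx K)
        _ = lpNorm 2 x := Real.sqrt_sq (lpNorm_two_nonneg x)
    have h2 : Real.sqrt (∑ n ∈ K, y n ^ 2) ≤ lpNorm 2 y := by
      calc Real.sqrt (∑ n ∈ K, y n ^ 2) ≤ Real.sqrt (lpNorm 2 y ^ 2) :=
            Real.sqrt_le_sqrt (sum_sq_le_lpNorm_sq hy K)
        _ = lpNorm 2 y := Real.sqrt_sq (lpNorm_two_nonneg y)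
    exact mul_le_mul h1 h2 (Real.sqrt_nonneg _) (lpNorm_two_nonneg x)
  constructor
  · intro x hx
    intro y hy
    exact (E.mem_of_summable hmax hsym (hprod x y hx.1 hy)).1
  · refine ⟨E.nrm (e 0), E.nrm_nonneg _, fun x hx => ?_⟩
    simp only [LinearMap.id_coe, id_eq]
    refine Real.sSup_le ?_ ?_
    · rintro c ⟨y, hy, hy1, rfl⟩
      calc E.nrm (fun n => x n * y n) ≤ (∑' n, |x n * y n|) * E.nrm (e 0) :=
            (E.mem_of_summable hmax hsym (hprod x y hx.1 hy)).2
        _ ≤ (lpNorm 2 x * lpNorm 2 y) * E.nrm (e 0) := by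
            refine mul_le_mul_of_nonneg_right (hCS x y hx.1 hy) (E.nrm_nonneg _)
        _ ≤ (lpNorm 2 x * 1) * E.nrm (e 0) := by
            refine mul_le_mul_of_nonneg_right
              (mul_le_mul_of_nonneg_left hy1 (lpNorm_two_nonneg x)) (E.nrm_nonneg _)
        _ = lpNorm 2 x * E.nrm (e 0) := by rw [mul_one]
        _ ≤ max (lpNorm 2 x) (linfNorm x) * E.nrm (e 0) :=
            mul_le_mul_of_nonneg_right (le_max_left _ _) (E.nrm_nonneg _)
        _ = E.nrm (e 0) * interNrm (lpNorm 2) linfNorm x := by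
            rw [mul_comm]; rfl
    · have h0 : 0 ≤ interNrm (lpNorm 2) linfNorm x :=
        le_trans (lpNorm_two_nonneg x) (le_max_left _ _)
      exact mul_nonneg (E.nrm_nonneg _) h0

/-- `linfNorm` is nonnegative. -/
theorem linfNorm_nonneg (x : ℕ → ℝ) : 0 ≤ linfNorm x :=
  Real.iSup_nonneg fun n => abs_nonneg _

/-- Clause 2: `M(ℓ₂,E) ⊆ ℓ₂ + ℓ_∞` boundedly. -/
theorem clause2 (E : SeqSpace) (hsym : E.IsSymmetric) :
    BddBetween (m2Mem E) (m2Norm E) (memSum (Memlp 2) MemLinf)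
      (sumNrm (Memlp 2) (lpNorm 2) MemLinf linfNorm) LinearMap.id := by
  have hbddinf : ∀ lam, m2Mem E lam → ∀ n, |lam n| * E.nrm (e 0) ≤ m2Norm E lam := by
    intro lam hlam n
    have h1 : E.nrm (fun m => lam m * e n m) ≤ m2Norm E lam :=
      le_m2Norm E hlam (memlp_two_e n) (le_of_eq (lpNorm_two_e n))
    have h2 : (fun m => lam m * e n m) = fun m => if m = n then lam n else 0 := by
      funext m
      by_cases h : m = n <;> simp [e, h]
    rw [h2, E.nrm_single hsym] at h1
    exact h1
  have hmeminf : ∀ lam, m2Mem E lam → MemLinf lam := by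
    intro lam hlam
    refine ⟨m2Norm E lam / E.nrm (e 0), fun n => ?_⟩
    rw [le_div_iff₀ E.e0_pos]
    exact hbddinf lam hlam n
  constructor
  · intro lam hlam
    exact ⟨0, lam, memlp_two_zero, hmeminf lam hlam, by simp⟩
  · refine ⟨(E.nrm (e 0))⁻¹, inv_nonneg.mpr (E.nrm_nonneg _), fun lam hlam => ?_⟩
    simp only [LinearMap.id_coe, id_eq]
    have hlinf : linfNorm lam ≤ (E.nrm (e 0))⁻¹ * m2Norm E lam := by
      refine Real.iSup_le (fun n => ?_) ?_
      · calc |lam n| = (E.nrm (e 0))⁻¹ * (E.nrm (e 0) * |lam n|) := by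
              rw [← mul_assoc, inv_mul_cancel₀ (ne_of_gt E.e0_pos), one_mul]
          _ ≤ (E.nrm (e 0))⁻¹ * m2Norm E lam := by
              refine mul_le_mul_of_nonneg_left ?_ (inv_nonneg.mpr (E.nrm_nonneg _))
              rw [mul_comm]
              exact hbddinf lam hlam n
      · exact mul_nonneg (inv_nonneg.mpr (E.nrm_nonneg _)) (m2Norm_nonneg E lam)
    have hK : sumNrm (Memlp 2) (lpNorm 2) MemLinf linfNorm lam ≤ linfNorm lam := by
      unfold sumNrm Kfn
      refine csInf_le ⟨0, fun c ⟨a, b, _, _, _, hc⟩ => ?_⟩ ?_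
      · rw [hc]
        have := lpNorm_two_nonneg a
        have := linfNorm_nonneg b
        nlinarith
      · refine ⟨0, lam, memlp_two_zero, hmeminf lam hlam, by simp, ?_⟩
        rw [lpNorm_two_zero, one_mul, zero_add]
    exact le_trans hK hlinf

end AuxClauses

section AuxConvex

/-- `M(ℓ₂,E)` is 2-convex (with constant one). -/
theorem twoConvex_m2 (E : SeqSpace) (hmax : E.IsMaximal) :
    TwoConvexOn (m2Mem E) (m2Norm E) := by
  refine ⟨1, one_pos, fun m lam hmem => ?_⟩
  rw [one_mul]
  set B := (∑ i, m2Norm E (lam i) ^ 2) ^ ((1:ℝ)/2) with hBdef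
  have hsum0 : 0 ≤ ∑ i, m2Norm E (lam i) ^ 2 := Finset.sum_nonneg fun i _ => sq_nonneg _
  have hB : 0 ≤ B := by
    rw [hBdef, ← Real.sqrt_eq_rpow]
    exact Real.sqrt_nonneg _
  have hBsq : B ^ 2 = ∑ i, m2Norm E (lam i) ^ 2 := by
    rw [hBdef, ← Real.sqrt_eq_rpow]
    exact Real.sq_sqrt hsum0
  have hs : ∀ n, ((∑ i, lam i n ^ 2) ^ ((1:ℝ)/2)) ^ 2 = ∑ i, lam i n ^ 2 := by
    intro n
    rw [← Real.sqrt_eq_rpow]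
    exact Real.sq_sqrt (Finset.sum_nonneg fun i _ => sq_nonneg _)
  refine (core E hmax (fun n => (∑ i, lam i n ^ 2) ^ ((1:ℝ)/2)) B hB ?_).2
  intro x hx K
  calc ∑ n ∈ K, (fun n => (∑ i, lam i n ^ 2) ^ ((1:ℝ)/2)) n ^ 2 * x n ^ 2
      = ∑ n ∈ K, ∑ i, lam i n ^ 2 * x n ^ 2 := by
        refine Finset.sum_congr rfl fun n _ => ?_
        show ((∑ i, lam i n ^ 2) ^ ((1:ℝ)/2)) ^ 2 * x n ^ 2 = _
        rw [hs n, Finset.sum_mul]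
    _ = ∑ i, ∑ n ∈ K, lam i n ^ 2 * x n ^ 2 := Finset.sum_comm
    _ ≤ ∑ i, m2Norm E (lam i) ^ 2 := Finset.sum_le_sum fun i _ => eval_le E (hmem i) hx K
    _ = B ^ 2 := hBsq.symm

end AuxConvex

section AuxInterp

/-- Summation-by-parts comparison: against nonincreasing nonnegative weights, partial-sum
domination transfers to weighted sums. -/
theorem abel_cmp : ∀ (J : ℕ) (w a b : ℕ → ℝ),
    (∀ j, j < J → 0 ≤ w j) →
    (∀ j j', j ≤ j' → j' < J → w j' ≤ w j) →
    (∀ j, j ≤ J → ∑ l ∈ Finset.range j, a l ≤ ∑ l ∈ Finset.range j, b l) →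
    ∑ j ∈ Finset.range J, a j * w j ≤ ∑ j ∈ Finset.range J, b j * w j := by
  intro J
  induction J with
  | zero => intro w a b _ _ _; simp
  | succ J ih =>
    intro w a b hw0 hwa hab
    have hid : ∀ c : ℕ → ℝ, ∑ j ∈ Finset.range (J+1), c j * w j
        = (∑ j ∈ Finset.range J, c j * (w j - w J))
          + (∑ j ∈ Finset.range (J+1), c j) * w J := by
      intro c
      have h1 : ∀ j ∈ Finset.range J, c j * (w j - w J) = c j * w j - c j * w J :=
        fun j _ => by ring
      rw [Finset.sum_congr rfl h1, Finset.sum_sub_distrib,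
        Finset.sum_range_succ (fun j => c j * w j), Finset.sum_range_succ c, add_mul,
        Finset.sum_mul]
      ring
    rw [hid a, hid b]
    have h1 : ∑ j ∈ Finset.range J, a j * (w j - w J)
        ≤ ∑ j ∈ Finset.range J, b j * (w j - w J) := by
      refine ih (fun j => w j - w J) a b ?_ ?_ ?_
      · intro j hj
        have := hwa j J (by omega) (by omega)
        linarith
      · intro j j' hjj hj'
        have := hwa j j' hjj (by omega)
        linarith
      · intro j hj
        exact hab j (by omega)
    have h2 : (∑ j ∈ Finset.range (J+1), a j) * w J
        ≤ (∑ j ∈ Finset.range (J+1), b j) * w J :=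
      mul_le_mul_of_nonneg_right (hab (J+1) le_rfl) (hw0 J (by omega))
    linarith

/-- Enumeration of a finite set of indices in order of decreasing key. -/
theorem exists_sorted_enum (K : Finset ℕ) (key : ℕ → ℝ) :
    ∃ σ : ℕ → ℕ,
      (∀ j j', j < K.card → j' < K.card → j ≠ j' → σ j ≠ σ j') ∧
      (Finset.range K.card).image σ = K ∧
      (∀ j j', j ≤ j' → j' < K.card → key (σ j') ≤ key (σ j)) := by
  classical
  set g : ℕ → ℝ ×ₗ ℕ := fun n => toLex (-(key n), n) with hg
  have hginj : Function.Injective g := by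
    intro p q hpq
    have := congrArg (fun r : ℝ ×ₗ ℕ => (ofLex r).2) hpq
    simpa [hg] using this
  set G : Finset (ℝ ×ₗ ℕ) := K.image g with hG
  have hcard : G.card = K.card := Finset.card_image_of_injective K hginj
  set iso := G.orderIsoOfFin hcard with hiso
  set σ : ℕ → ℕ := fun j => if h : j < K.card then (ofLex (iso ⟨j, h⟩).val).2 else 0 with hσ
  have hval : ∀ (j : ℕ) (h : j < K.card), (iso ⟨j, h⟩).val = g (σ j) := by
    intro j h
    have hmem : (iso ⟨j, h⟩).val ∈ K.image g := (iso ⟨j, h⟩).2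
    obtain ⟨n, _, hgn⟩ := Finset.mem_image.mp hmem
    have h2 : σ j = n := by
      rw [hσ]
      simp only [h, dif_pos]
      rw [← hgn]
      simp [hg]
    rw [h2, hgn]
  have hmemK : ∀ j, j < K.card → σ j ∈ K := by
    intro j h
    have hmem : g (σ j) ∈ K.image g := by
      rw [← hval j h]
      exact (iso ⟨j, h⟩).2
    obtain ⟨n, hn, hgn⟩ := Finset.mem_image.mp hmem
    rwa [← hginj hgn]
  have hinj : ∀ j j', j < K.card → j' < K.card → j ≠ j' → σ j ≠ σ j' := by
    intro j j' hj hj' hne hc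
    refine hne ?_
    have : (iso ⟨j, hj⟩).val = (iso ⟨j', hj'⟩).val := by
      rw [hval j hj, hval j' hj', hc]
    have h2 : (⟨j, hj⟩ : Fin K.card) = ⟨j', hj'⟩ := iso.injective (Subtype.ext this)
    exact Fin.mk.inj_iff.mp h2
  refine ⟨σ, hinj, ?_, ?_⟩
  · refine Finset.eq_of_subset_of_card_le ?_ ?_
    · intro n hn
      rw [Finset.mem_image] at hn
      obtain ⟨j, hj, rfl⟩ := hn
      exact hmemK j (Finset.mem_range.mp hj)
    · rw [Finset.card_image_of_injOn, Finset.card_range]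
      intro p hp q hq hpq
      by_contra hne
      exact hinj p q (by simpa using hp) (by simpa using hq) hne hpq
  · intro j j' hjj hj'
    have hj : j < K.card := by omega
    have hle : iso ⟨j, hj⟩ ≤ iso ⟨j', hj'⟩ := iso.monotone (by exact Fin.mk_le_mk.mpr hjj)
    have hle2 : (iso ⟨j, hj⟩).val ≤ (iso ⟨j', hj'⟩).val := hle
    rw [hval j hj, hval j' hj'] at hle2
    rw [hg] at hle2
    rcases Prod.Lex.le_iff.mp hle2 with h | ⟨h, _⟩
    · simp only [ofLex_toLex] at h
      linarith
    · simp only [ofLex_toLex] at h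
      linarith [le_of_eq h]

/-- Greedy selection of distinct indices nearly attaining the decreasing rearrangement. -/
theorem exists_greedy (lam : ℕ → ℝ) {δ : ℝ} (hδ : 0 < δ) (J : ℕ) :
    ∃ ι : ℕ → ℕ, (∀ j j', j < J → j' < J → j ≠ j' → ι j ≠ ι j') ∧
      ∀ j, j < J → decr lam j - δ < |lam (ι j)| := by
  classical
  let step : ℕ → Finset ℕ → Finset ℕ := fun j P =>
    if h : P.card ≤ j then insert (Classical.choose (exists_notmem_gt_decr_sub
      (x := lam) hδ P h)) P else P
  let F : ℕ → Finset ℕ := fun j => Nat.rec ∅ step j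
  have hFsucc : ∀ j, F (j+1) = step j (F j) := fun j => rfl
  have hFcard : ∀ j, (F j).card ≤ j := by
    intro j
    induction j with
    | zero => simp [F]
    | succ j ih =>
      rw [hFsucc, show step j (F j) = insert _ (F j) from dif_pos ih]
      calc (insert _ (F j)).card ≤ (F j).card + 1 := Finset.card_insert_le _ _
        _ ≤ j + 1 := by omega
  set ι : ℕ → ℕ := fun j => Classical.choose (exists_notmem_gt_decr_sub
    (x := lam) hδ (F j) (hFcard j)) with hι
  have hspec : ∀ j, ι j ∉ F j ∧ decr lam j - δ < |lam (ι j)| := fun j =>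
    Classical.choose_spec (exists_notmem_gt_decr_sub (x := lam) hδ (F j) (hFcard j))
  have hmem : ∀ j, ι j ∈ F (j+1) := by
    intro j
    rw [hFsucc, show step j (F j) = insert (ι j) (F j) from dif_pos (hFcard j)]
    exact Finset.mem_insert_self _ _
  have hmono : ∀ j j', j ≤ j' → F j ⊆ F j' := by
    intro j j' h
    induction j' with
    | zero =>
      have : j = 0 := by omega
      rw [this]
    | succ j' ih =>
      rcases Nat.lt_or_ge j (j'+1) with h2 | h2
      · refine subset_trans (ih (by omega)) ?_
        rw [hFsucc]
        by_cases hc : (F j').card ≤ j'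
        · rw [show step j' (F j') = insert (ι j') (F j') from dif_pos hc]
          exact Finset.subset_insert _ _
        · rw [show step j' (F j') = F j' from dif_neg hc]
      · have : j = j' + 1 := by omega
        rw [this]
  refine ⟨ι, ?_, fun j _ => (hspec j).2⟩
  intro j j' hj hj' hne
  rcases Nat.lt_or_ge j j' with h | h
  · intro hc
    have h1 : ι j ∈ F j' := hmono (j+1) j' (by omega) (hmem j)
    rw [hc] at h1
    exact (hspec j').1 h1
  · have h' : j' < j := by omega
    intro hc
    have h1 : ι j' ∈ F j := hmono (j'+1) j (by omega) (hmem j')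
    rw [← hc] at h1
    exact (hspec j).1 h1

/-- Elements of `M(ℓ₂,E)` are bounded sequences. -/
theorem m2Mem_bounded (E : SeqSpace) (hsym : E.IsSymmetric) {lam : ℕ → ℝ}
    (hlam : m2Mem E lam) : ∃ M, ∀ n, |lam n| ≤ M := by
  refine ⟨m2Norm E lam / E.nrm (e 0), fun n => ?_⟩
  rw [le_div_iff₀ E.e0_pos]
  have h1 : E.nrm (fun m => lam m * e n m) ≤ m2Norm E lam :=
    le_m2Norm E hlam (memlp_two_e n) (le_of_eq (lpNorm_two_e n))
  have h2 : (fun m => lam m * e n m) = fun m => if m = n then lam n else 0 := by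
    funext m
    by_cases h : m = n <;> simp [e, h]
  rw [h2, E.nrm_single hsym] at h1
  exact h1

end AuxInterp

section AuxQM

/-- Finite ℓ₂-sections of `T lam` are controlled via the decreasing rearrangement of
`lam`, for `T` bounded on `ℓ₂` and `ℓ_∞`. -/
theorem qm (T : (ℕ → ℝ) →ₗ[ℝ] (ℕ → ℝ))
    {C2 Ci : ℝ} (hC2 : 0 ≤ C2) (hCi : 0 ≤ Ci)
    (hT2m : ∀ x, Memlp 2 x → Memlp 2 (T x))
    (hT2b : ∀ x, Memlp 2 x → lpNorm 2 (T x) ≤ C2 * lpNorm 2 x)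
    (hTim : ∀ x, MemLinf x → MemLinf (T x))
    (hTib : ∀ x, MemLinf x → linfNorm (T x) ≤ Ci * linfNorm x)
    (lam : ℕ → ℝ) (hbdd : ∃ M, ∀ n, |lam n| ≤ M)
    (j : ℕ) (A : Finset ℕ) (hA : A.card ≤ j) :
    ∑ n ∈ A, T lam n ^ 2 ≤ (C2 + Ci) ^ 2 * ∑ l ∈ Finset.range j, decr lam l ^ 2 := by
  classical
  rcases Nat.eq_zero_or_pos j with rfl | hj
  · have hA0 : A = ∅ := Finset.card_eq_zero.mp (by omega)
    simp [hA0]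
  set τ := decr lam (j-1) with hτ
  have hτ0 : 0 ≤ τ := decr_nonneg hbdd _
  set b : ℕ → ℝ := fun n => if τ < lam n then τ else if lam n < -τ then -τ else lam n with hb
  set a : ℕ → ℝ := fun n => lam n - b n with ha2
  have habs_b : ∀ n, |b n| ≤ τ := by
    intro n
    rw [hb]
    by_cases h1 : τ < lam n
    · simp only [h1, if_true]
      rw [abs_of_nonneg hτ0]
    · by_cases h2 : lam n < -τ
      · simp only [h1, if_false, h2, if_true]
        rw [abs_neg, abs_of_nonneg hτ0]
      · simp only [h1, if_false, h2, if_false]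
        rw [abs_le]
        constructor <;> linarith [not_lt.mp h1, not_lt.mp h2]
  have ha_vals : ∀ n, a n = lam n - b n := fun n => rfl
  have ha_zero : ∀ n, a n ≠ 0 → τ < |lam n| := by
    intro n hn
    rw [ha_vals, hb] at hn
    by_cases h1 : τ < lam n
    · rw [abs_of_nonneg (by linarith : (0:ℝ) ≤ lam n)]
      exact h1
    · by_cases h2 : lam n < -τ
      · rw [abs_of_neg (by linarith : lam n < 0)]
        linarith
      · exfalso
        apply hn
        simp only [h1, if_false, h2, if_false]
        ring
  have ha_abs : ∀ n, |a n| ≤ |lam n| := by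
    intro n
    rw [ha_vals, hb]
    by_cases h1 : τ < lam n
    · simp only [h1, if_true]
      rw [abs_of_nonneg (by linarith), abs_of_nonneg (by linarith : (0:ℝ) ≤ lam n)]
      linarith
    · by_cases h2 : lam n < -τ
      · simp only [h1, if_false, h2, if_true]
        rw [show lam n - -τ = lam n + τ by ring, abs_of_nonpos (by linarith),
          abs_of_neg (by linarith : lam n < 0)]
        linarith
      · simp only [h1, if_false, h2, if_false]
        simp
  obtain ⟨V, hVcard, hV⟩ := card_gt_decr hbdd (j-1)
  have haV : ∀ n ∉ V, a n = 0 := by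
    intro n hn
    by_contra h
    exact hn (hV n (ha_zero n h))
  have hamem : Memlp 2 a := memlp_two_finsupp V haV
  have hbmem : MemLinf b := ⟨τ, habs_b⟩
  set D := Real.sqrt (∑ l ∈ Finset.range j, decr lam l ^ 2) with hD
  have hD0 : 0 ≤ D := Real.sqrt_nonneg _
  have hsum0 : 0 ≤ ∑ l ∈ Finset.range j, decr lam l ^ 2 :=
    Finset.sum_nonneg fun l _ => sq_nonneg _
  have hDsq : D ^ 2 = ∑ l ∈ Finset.range j, decr lam l ^ 2 := Real.sq_sqrt hsum0
  have hlpa : lpNorm 2 a ≤ D := by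
    rw [lpNorm_two_finsupp V haV, hD]
    refine Real.sqrt_le_sqrt ?_
    calc ∑ n ∈ V, a n ^ 2 ≤ ∑ n ∈ V, lam n ^ 2 := by
          refine Finset.sum_le_sum fun n _ => ?_
          rw [← sq_abs (a n), ← sq_abs (lam n)]
          exact pow_le_pow_left₀ (abs_nonneg _) (ha_abs n) 2
      _ ≤ ∑ l ∈ Finset.range V.card, decr lam l ^ 2 := sum_sq_le_decr_sum hbdd V.card V rfl
      _ ≤ ∑ l ∈ Finset.range j, decr lam l ^ 2 := by
          refine Finset.sum_le_sum_of_subset_of_nonneg ?_ fun l _ _ => sq_nonneg _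
          exact Finset.range_subset_range.mpr (by omega)
  have hlinfb : linfNorm b ≤ τ := Real.iSup_le habs_b hτ0
  have hjτ : Real.sqrt (j : ℝ) * τ ≤ D := by
    rw [hD]
    have h1 : (j : ℝ) * τ ^ 2 ≤ ∑ l ∈ Finset.range j, decr lam l ^ 2 := by
      have h2 : ∀ l ∈ Finset.range j, τ ^ 2 ≤ decr lam l ^ 2 := by
        intro l hl
        have hl2 : l ≤ j - 1 := by
          have := Finset.mem_range.mp hl
          omega
        exact pow_le_pow_left₀ hτ0 (decr_antitone hbdd hl2) 2
      calc (j:ℝ) * τ^2 = ∑ _l ∈ Finset.range j, τ^2 := by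
            rw [Finset.sum_const, Finset.card_range, nsmul_eq_mul]
        _ ≤ _ := Finset.sum_le_sum h2
    calc Real.sqrt (j : ℝ) * τ = Real.sqrt ((j:ℝ) * τ^2) := by
          rw [Real.sqrt_mul (Nat.cast_nonneg j), Real.sqrt_sq hτ0]
      _ ≤ _ := Real.sqrt_le_sqrt h1
  have hTdecomp : ∀ n, T lam n = T a n + T b n := by
    intro n
    have hlab : lam = a + b := by
      funext m
      show lam m = a m + b m
      rw [ha_vals]
      ring
    rw [hlab, map_add]
    rfl
  have hsqA0 : 0 ≤ ∑ n ∈ A, T lam n ^ 2 := Finset.sum_nonneg fun n _ => sq_nonneg _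
  have hsqrtA : Real.sqrt (∑ n ∈ A, T lam n ^ 2) ≤ (C2 + Ci) * D := by
    have h1 : ∀ n ∈ A, T lam n ^ 2 = (T a n + T b n) ^ 2 := fun n _ => by rw [hTdecomp]
    rw [Finset.sum_congr rfl h1]
    refine le_trans (sqrt_sum_sq_add_le A (fun n => T a n) (fun n => T b n)) ?_
    have h2 : Real.sqrt (∑ n ∈ A, T a n ^ 2) ≤ C2 * D := by
      calc Real.sqrt (∑ n ∈ A, T a n ^ 2) ≤ Real.sqrt (lpNorm 2 (T a) ^ 2) :=
            Real.sqrt_le_sqrt (sum_sq_le_lpNorm_sq (hT2m a hamem) A)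
        _ = lpNorm 2 (T a) := Real.sqrt_sq (lpNorm_two_nonneg _)
        _ ≤ C2 * lpNorm 2 a := hT2b a hamem
        _ ≤ C2 * D := mul_le_mul_of_nonneg_left hlpa hC2
    have h3 : Real.sqrt (∑ n ∈ A, T b n ^ 2) ≤ Ci * (Real.sqrt (j:ℝ) * τ) := by
      have hTbinf : MemLinf (T b) := hTim b hbmem
      have hbdd2 : BddAbove (Set.range fun n => |T b n|) := by
        obtain ⟨C, hC⟩ := hTbinf
        exact ⟨C, fun z ⟨n, hn⟩ => hn ▸ hC n⟩
      have habsle : ∀ n, |T b n| ≤ linfNorm (T b) := fun n => le_ciSup hbdd2 n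
      have h4 : ∀ n ∈ A, T b n ^ 2 ≤ linfNorm (T b) ^ 2 := by
        intro n _
        rw [← sq_abs]
        exact pow_le_pow_left₀ (abs_nonneg _) (habsle n) 2
      have h5 : ∑ n ∈ A, T b n ^2 ≤ (A.card : ℝ) * linfNorm (T b) ^ 2 := by
        calc ∑ n ∈ A, T b n ^2 ≤ A.card • (linfNorm (T b) ^2) :=
              Finset.sum_le_card_nsmul A _ _ h4
          _ = (A.card : ℝ) * linfNorm (T b) ^ 2 := nsmul_eq_mul _ _
      calc Real.sqrt (∑ n ∈ A, T b n ^ 2)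
          ≤ Real.sqrt ((A.card : ℝ) * linfNorm (T b) ^2) := Real.sqrt_le_sqrt h5
        _ = Real.sqrt (A.card : ℝ) * linfNorm (T b) := by
            rw [Real.sqrt_mul (Nat.cast_nonneg _), Real.sqrt_sq (linfNorm_nonneg _)]
        _ ≤ Real.sqrt (j : ℝ) * (Ci * τ) := by
            refine mul_le_mul (Real.sqrt_le_sqrt (Nat.cast_le.mpr hA))
              (le_trans (hTib b hbmem) (mul_le_mul_of_nonneg_left hlinfb hCi))
              (linfNorm_nonneg _) (Real.sqrt_nonneg _)
        _ = Ci * (Real.sqrt (j:ℝ) * τ) := by ring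
    calc Real.sqrt (∑ n ∈ A, T a n ^2) + Real.sqrt (∑ n ∈ A, T b n ^2)
        ≤ C2 * D + Ci * (Real.sqrt (j:ℝ) * τ) := add_le_add h2 h3
      _ ≤ C2 * D + Ci * D := by
          have := mul_le_mul_of_nonneg_left hjτ hCi
          linarith
      _ = (C2 + Ci) * D := by ring
  calc ∑ n ∈ A, T lam n ^ 2 = Real.sqrt (∑ n ∈ A, T lam n ^ 2) ^ 2 :=
        (Real.sq_sqrt hsqA0).symm
    _ ≤ ((C2 + Ci) * D) ^ 2 := pow_le_pow_left₀ (Real.sqrt_nonneg _) hsqrtA 2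
    _ = (C2 + Ci) ^ 2 * D ^ 2 := by rw [mul_pow]
    _ = (C2 + Ci) ^ 2 * ∑ l ∈ Finset.range j, decr lam l ^ 2 := by rw [hDsq]

/-- Rearrangements with repetitions dropped do not increase the norm of a member
of a symmetric space. -/
theorem SeqSpace.nrm_rearr_le (E : SeqSpace) (hsym : E.IsSymmetric) {w : ℕ → ℝ}
    (hw : E.mem w) (J : ℕ) (ι σ : ℕ → ℕ)
    (hι : ∀ j j', j < J → j' < J → j ≠ j' → ι j ≠ ι j')
    (hσ : ∀ j j', j < J → j' < J → j ≠ j' → σ j ≠ σ j') :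
    E.nrm (∑ j ∈ Finset.range J, fun m => if m = σ j then w (ι j) else 0) ≤ E.nrm w := by
  classical
  set w2 : ℕ → ℝ := ∑ j ∈ Finset.range J, fun m => if m = σ j then w (ι j) else 0 with hw2
  have hmem2 : E.mem w2 := E.mem_finsetSum _ _ fun j _ => E.mem_single _ _
  have heval : ∀ j, j < J → w2 (σ j) = w (ι j) := by
    intro j hj
    rw [hw2, Finset.sum_apply]
    rw [Finset.sum_eq_single_of_mem j (Finset.mem_range.mpr hj)]
    · simp
    · intro j' hj' hne
      have hne2 : σ j ≠ σ j' := hσ j j' hj (Finset.mem_range.mp hj') (Ne.symm hne)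
      simp [hne2]
  have heval0 : ∀ m, (∀ j, j < J → σ j ≠ m) → w2 m = 0 := by
    intro m hm
    rw [hw2, Finset.sum_apply]
    refine Finset.sum_eq_zero fun j hj => ?_
    have := hm j (Finset.mem_range.mp hj)
    simp [Ne.symm this]
  have hbddw : ∃ M, ∀ n, |w n| ≤ M := E.bounded_of_mem hsym hw
  have hdecr_le : ∀ l, decr w2 l ≤ decr w l := by
    intro l
    refine csInf_le_csInf (decrSet_bddBelow w2 l) (decrSet_nonempty hbddw l) ?_
    rintro aa ⟨Jset, hJcard, hJle⟩
    have haa0 : 0 ≤ aa := decrSet_nonneg ⟨Jset, hJcard, hJle⟩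
    have hcardfil : ((Finset.range J).filter (fun j => ι j ∈ Jset)).card ≤ Jset.card := by
      refine Finset.card_le_card_of_injOn ι (fun j hj => (Finset.mem_filter.mp hj).2) ?_
      intro p hp q hq hpq
      simp only [Finset.coe_filter, Set.mem_setOf_eq, Finset.mem_range] at hp hq
      by_contra hne
      exact hι p q hp.1 hq.1 hne hpq
    refine ⟨((Finset.range J).filter (fun j => ι j ∈ Jset)).image σ, ?_, ?_⟩
    · calc (((Finset.range J).filter (fun j => ι j ∈ Jset)).image σ).card
          ≤ ((Finset.range J).filter (fun j => ι j ∈ Jset)).card := Finset.card_image_le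
        _ ≤ Jset.card := hcardfil
        _ ≤ l := hJcard
    · intro m hm
      by_cases hcase : ∃ j, j < J ∧ σ j = m
      · obtain ⟨j, hj, rfl⟩ := hcase
        rw [heval j hj]
        have hjnot : ι j ∉ Jset := by
          intro hc
          exact hm (Finset.mem_image.mpr
            ⟨j, Finset.mem_filter.mpr ⟨Finset.mem_range.mpr hj, hc⟩, rfl⟩)
        exact hJle _ hjnot
      · push_neg at hcase
        rw [heval0 m (fun j hj => hcase j hj)]
        simpa using haa0
  have hb2 : ∃ M, ∀ n, |w2 n| ≤ M := E.bounded_of_mem hsym hmem2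
  obtain ⟨hmemd2, heq2⟩ := hsym w2 hmem2
  obtain ⟨hmemd, heqd⟩ := hsym w hw
  rw [← heq2, ← heqd]
  refine (E.ideal _ _ hmemd fun m => ?_).2
  rw [abs_of_nonneg (decr_nonneg hb2 m), abs_of_nonneg (decr_nonneg hbddw m)]
  exact hdecr_le m

end AuxQM

section AuxKey

theorem sum_single_eval {J : ℕ} (p : ℕ → ℕ) (v : ℕ → ℝ)
    (hp : ∀ j j', j < J → j' < J → j ≠ j' → p j ≠ p j') {j : ℕ} (hj : j < J) :
    (∑ i ∈ Finset.range J, fun m => if m = p i then v i else 0) (p j) = v j := by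
  rw [Finset.sum_apply, Finset.sum_eq_single_of_mem j (Finset.mem_range.mpr hj)]
  · simp
  · intro i hi hne
    have h : p j ≠ p i := hp j i hj (Finset.mem_range.mp hi) (Ne.symm hne)
    simp [h]

theorem sum_single_eval0 {J : ℕ} (p : ℕ → ℕ) (v : ℕ → ℝ) {m : ℕ}
    (hm : ∀ j, j < J → p j ≠ m) :
    (∑ i ∈ Finset.range J, fun m => if m = p i then v i else 0) m = 0 := by
  rw [Finset.sum_apply]
  refine Finset.sum_eq_zero fun i hi => ?_
  have h := hm i (Finset.mem_range.mp hi)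
  simp [Ne.symm h]

/-- The key K-monotonicity estimate. -/
theorem key_est (E : SeqSpace) (hsym : E.IsSymmetric)
    (T : (ℕ → ℝ) →ₗ[ℝ] (ℕ → ℝ)) {C2 Ci : ℝ} (hC2 : 0 ≤ C2) (hCi : 0 ≤ Ci)
    (hT2m : ∀ x, Memlp 2 x → Memlp 2 (T x))
    (hT2b : ∀ x, Memlp 2 x → lpNorm 2 (T x) ≤ C2 * lpNorm 2 x)
    (hTim : ∀ x, MemLinf x → MemLinf (T x))
    (hTib : ∀ x, MemLinf x → linfNorm (T x) ≤ Ci * linfNorm x)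
    {lam : ℕ → ℝ} (hlam : m2Mem E lam) :
    ∀ x ∈ Sset E, ∀ K : Finset ℕ,
      ∑ n ∈ K, T lam n ^ 2 * x n ^ 2 ≤ ((C2 + Ci) * m2Norm E lam) ^ 2 := by
  classical
  intro x hx K
  obtain ⟨M, hM⟩ := m2Mem_bounded E hsym hlam
  have hM0 : 0 ≤ M := le_trans (abs_nonneg _) (hM 0)
  obtain ⟨σ, hσinj, hσim, hσmono⟩ := exists_sorted_enum K (fun n => |x n|)
  set J := K.card with hJ
  have hσinjOn : ∀ p ∈ Finset.range J, ∀ q ∈ Finset.range J, σ p = σ q → p = q := by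
    intro p hp q hq hpq
    by_contra hne
    exact hσinj p q (Finset.mem_range.mp hp) (Finset.mem_range.mp hq) hne hpq
  have hre : ∑ n ∈ K, T lam n ^ 2 * x n ^ 2
      = ∑ j ∈ Finset.range J, T lam (σ j) ^ 2 * x (σ j) ^ 2 := by
    rw [← hσim, Finset.sum_image hσinjOn]
  have habel : ∑ j ∈ Finset.range J, T lam (σ j) ^ 2 * x (σ j) ^ 2
      ≤ ∑ j ∈ Finset.range J, ((C2 + Ci) ^ 2 * decr lam j ^ 2) * x (σ j) ^ 2 := by
    refine abel_cmp J (fun j => x (σ j) ^ 2) _ _ (fun j _ => sq_nonneg _) ?_ ?_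
    · intro j j' hjj hj'
      have h := hσmono j j' hjj hj'
      calc x (σ j') ^ 2 = |x (σ j')| ^ 2 := (sq_abs _).symm
        _ ≤ |x (σ j)| ^ 2 := pow_le_pow_left₀ (abs_nonneg _) h 2
        _ = x (σ j) ^ 2 := sq_abs _
    · intro j hjJ
      have hinjOnj : ∀ p ∈ Finset.range j, ∀ q ∈ Finset.range j, σ p = σ q → p = q := by
        intro p hp q hq hpq
        have hp' := Finset.mem_range.mp hp
        have hq' := Finset.mem_range.mp hq
        by_contra hne
        exact hσinj p q (by omega) (by omega) hne hpq
      have h1 : ∑ l ∈ Finset.range j, T lam (σ l) ^ 2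
          = ∑ n ∈ (Finset.range j).image σ, T lam n ^ 2 :=
        (Finset.sum_image (f := fun n => T lam n ^ 2) hinjOnj).symm
      have hcard : ((Finset.range j).image σ).card ≤ j :=
        le_trans Finset.card_image_le (by simp)
      have h2 := qm T hC2 hCi hT2m hT2b hTim hTib lam ⟨M, hM⟩ j _ hcard
      rw [h1]
      calc ∑ n ∈ (Finset.range j).image σ, T lam n ^ 2
          ≤ (C2 + Ci) ^ 2 * ∑ l ∈ Finset.range j, decr lam l ^ 2 := h2
        _ = ∑ l ∈ Finset.range j, (C2 + Ci) ^ 2 * decr lam l ^ 2 := Finset.mul_sum _ _ _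
  have hplace : ∑ j ∈ Finset.range J, decr lam j ^ 2 * x (σ j) ^ 2
      ≤ m2Norm E lam ^ 2 := by
    refine le_of_forall_pos_le_add fun ε hε => ?_
    set X := ∑ j ∈ Finset.range J, x (σ j) ^ 2 with hX
    have hX0 : 0 ≤ X := Finset.sum_nonneg fun j _ => sq_nonneg _
    set δ := min 1 (ε / ((2*M+1) * X + 1)) with hδdef
    have hδpos : 0 < δ := lt_min one_pos (div_pos hε (by positivity))
    have hδ1 : δ ≤ 1 := min_le_left _ _
    obtain ⟨ι, hιinj, hιval⟩ := exists_greedy lam hδpos J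
    have hιinjOn : ∀ p ∈ Finset.range J, ∀ q ∈ Finset.range J, ι p = ι q → p = q := by
      intro p hp q hq hpq
      by_contra hne
      exact hιinj p q (Finset.mem_range.mp hp) (Finset.mem_range.mp hq) hne hpq
    set x2 : ℕ → ℝ := ∑ j ∈ Finset.range J, fun m => if m = ι j then |x (σ j)| else 0
      with hx2
    have heval2 : ∀ j, j < J → x2 (ι j) = |x (σ j)| := fun j hj =>
      sum_single_eval ι _ hιinj hj
    have hsupp2 : ∀ n, n ∉ (Finset.range J).image ι → x2 n = 0 := by
      intro n hn
      exact sum_single_eval0 ι _ fun j hj hc =>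
        hn (Finset.mem_image.mpr ⟨j, Finset.mem_range.mpr hj, hc⟩)
    have hx2S : x2 ∈ Sset E := by
      constructor
      · refine ⟨((Finset.range J).image ι).sup id + 1, fun m hm => ?_⟩
        refine hsupp2 m fun hmem => ?_
        have h := Finset.le_sup (f := id) hmem
        simp only [id_eq] at h
        omega
      · intro w hw K'
        set w2 : ℕ → ℝ := ∑ j ∈ Finset.range J, fun m => if m = σ j then w (ι j) else 0
          with hw2
        have hw2mem : E.mem w2 := E.mem_finsetSum _ _ fun j _ => E.mem_single _ _
        have hw2eval : ∀ j, j < J → w2 (σ j) = w (ι j) := fun j hj =>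
          sum_single_eval σ _ hσinj hj
        have hstep1 : ∑ n ∈ K', |w n * x2 n|
            ≤ ∑ n ∈ (Finset.range J).image ι, |w n * x2 n| := by
          rw [← Finset.sum_filter_of_ne (s := K')
            (p := fun n => n ∈ (Finset.range J).image ι)
            (fun n _ hne => by
              by_contra hnk
              rw [hsupp2 n hnk, mul_zero, abs_zero] at hne
              exact hne rfl)]
          refine Finset.sum_le_sum_of_subset_of_nonneg ?_ fun n _ _ => abs_nonneg _
          exact fun n hn => (Finset.mem_filter.mp hn).2
        have hstep2 : ∑ n ∈ (Finset.range J).image ι, |w n * x2 n|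
            = ∑ j ∈ Finset.range J, |w (ι j)| * |x (σ j)| := by
          rw [Finset.sum_image hιinjOn]
          refine Finset.sum_congr rfl fun j hj => ?_
          rw [heval2 j (Finset.mem_range.mp hj), abs_mul, abs_abs]
        have hstep3 : ∑ j ∈ Finset.range J, |w (ι j)| * |x (σ j)|
            = ∑ n ∈ K, |w2 n * x n| := by
          rw [← hσim, Finset.sum_image hσinjOn]
          refine Finset.sum_congr rfl fun j hj => ?_
          rw [hw2eval j (Finset.mem_range.mp hj), abs_mul]
        have hstep4 : ∑ n ∈ K, |w2 n * x n| ≤ E.nrm w2 := hx.2 w2 hw2mem K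
        have hstep5 : E.nrm w2 ≤ E.nrm w :=
          E.nrm_rearr_le hsym hw J ι σ hιinj hσinj
        calc ∑ n ∈ K', |w n * x2 n| ≤ ∑ n ∈ (Finset.range J).image ι, |w n * x2 n| :=
              hstep1
          _ = ∑ j ∈ Finset.range J, |w (ι j)| * |x (σ j)| := hstep2
          _ = ∑ n ∈ K, |w2 n * x n| := hstep3
          _ ≤ E.nrm w2 := hstep4
          _ ≤ E.nrm w := hstep5
    have hterm : ∀ j ∈ Finset.range J, decr lam j ^ 2 * x (σ j) ^ 2
        ≤ (lam (ι j) ^ 2 + δ * (2*M+1)) * x (σ j) ^ 2 := by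
      intro j hj
      refine mul_le_mul_of_nonneg_right ?_ (sq_nonneg _)
      have h1 : decr lam j ≤ |lam (ι j)| + δ := by
        have := hιval j (Finset.mem_range.mp hj)
        linarith
      have h2 : decr lam j ^ 2 ≤ (|lam (ι j)| + δ) ^ 2 :=
        pow_le_pow_left₀ (decr_nonneg ⟨M, hM⟩ j) h1 2
      have h3 : (|lam (ι j)| + δ) ^ 2 = lam (ι j) ^ 2 + δ * (2*|lam (ι j)| + δ) := by
        calc (|lam (ι j)| + δ) ^ 2 = |lam (ι j)| ^ 2 + δ * (2*|lam (ι j)| + δ) := by ring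
          _ = lam (ι j) ^ 2 + δ * (2*|lam (ι j)| + δ) := by rw [sq_abs]
      have h4 : δ * (2*|lam (ι j)| + δ) ≤ δ * (2*M+1) := by
        refine mul_le_mul_of_nonneg_left ?_ hδpos.le
        have h5 := hM (ι j)
        linarith
      rw [h3] at h2
      linarith
    have hsum1 : ∑ j ∈ Finset.range J, decr lam j ^ 2 * x (σ j) ^ 2
        ≤ (∑ j ∈ Finset.range J, lam (ι j) ^ 2 * x (σ j) ^ 2) + δ * ((2*M+1) * X) := by
      calc ∑ j ∈ Finset.range J, decr lam j ^ 2 * x (σ j) ^ 2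
          ≤ ∑ j ∈ Finset.range J, (lam (ι j) ^ 2 + δ * (2*M+1)) * x (σ j) ^ 2 :=
            Finset.sum_le_sum hterm
        _ = (∑ j ∈ Finset.range J, lam (ι j) ^ 2 * x (σ j) ^ 2)
            + δ * (2*M+1) * ∑ j ∈ Finset.range J, x (σ j) ^ 2 := by
            rw [Finset.mul_sum, ← Finset.sum_add_distrib]
            refine Finset.sum_congr rfl fun j _ => by ring
        _ = (∑ j ∈ Finset.range J, lam (ι j) ^ 2 * x (σ j) ^ 2) + δ * ((2*M+1) * X) := by
            rw [hX, mul_assoc]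
    have heval_sum : ∑ j ∈ Finset.range J, lam (ι j) ^ 2 * x (σ j) ^ 2
        ≤ m2Norm E lam ^ 2 := by
      have h1 : ∑ j ∈ Finset.range J, lam (ι j) ^ 2 * x (σ j) ^ 2
          = ∑ n ∈ (Finset.range J).image ι, lam n ^ 2 * x2 n ^ 2 := by
        rw [Finset.sum_image hιinjOn]
        refine Finset.sum_congr rfl fun j hj => ?_
        rw [heval2 j (Finset.mem_range.mp hj), sq_abs]
      rw [h1]
      exact eval_le E hlam hx2S _
    have hδbound : δ * ((2*M+1) * X) ≤ ε := by
      have h1 : δ ≤ ε / ((2*M+1)*X + 1) := min_le_right _ _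
      calc δ * ((2*M+1)*X) ≤ (ε / ((2*M+1)*X+1)) * ((2*M+1)*X) :=
            mul_le_mul_of_nonneg_right h1 (by positivity)
        _ ≤ ε := by
            rw [div_mul_eq_mul_div, div_le_iff₀ (by positivity)]
            nlinarith
    linarith
  rw [hre]
  calc ∑ j ∈ Finset.range J, T lam (σ j) ^ 2 * x (σ j) ^ 2
      ≤ ∑ j ∈ Finset.range J, ((C2 + Ci) ^ 2 * decr lam j ^ 2) * x (σ j) ^ 2 := habel
    _ = (C2 + Ci) ^ 2 * ∑ j ∈ Finset.range J, decr lam j ^ 2 * x (σ j) ^ 2 := by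
        rw [Finset.mul_sum]
        refine Finset.sum_congr rfl fun j _ => by ring
    _ ≤ (C2 + Ci) ^ 2 * m2Norm E lam ^ 2 :=
        mul_le_mul_of_nonneg_left hplace (by positivity)
    _ = ((C2 + Ci) * m2Norm E lam) ^ 2 := by rw [mul_pow]

/-- Clause 3: operators bounded on the couple are bounded on `M(ℓ₂,E)`. -/
theorem clause3 (E : SeqSpace) (hmax : E.IsMaximal) (hsym : E.IsSymmetric)
    (T : (ℕ → ℝ) →ₗ[ℝ] (ℕ → ℝ))
    (h2 : BddBetween (Memlp 2) (lpNorm 2) (Memlp 2) (lpNorm 2) T)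
    (hi : BddBetween MemLinf linfNorm MemLinf linfNorm T) :
    BddBetween (m2Mem E) (m2Norm E) (m2Mem E) (m2Norm E) T := by
  obtain ⟨hT2m, C2, hC2, hT2b⟩ := h2
  obtain ⟨hTim, Ci, hCi, hTib⟩ := hi
  have main : ∀ lam, m2Mem E lam →
      m2Mem E (T lam) ∧ m2Norm E (T lam) ≤ (C2 + Ci) * m2Norm E lam := by
    intro lam hlam
    refine core E hmax (T lam) ((C2 + Ci) * m2Norm E lam)
      (mul_nonneg (by linarith) (m2Norm_nonneg E lam)) ?_
    intro x hx K
    exact key_est E hsym T hC2 hCi hT2m hT2b hTim hTib hlam x hx K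
  exact ⟨fun lam hlam => (main lam hlam).1, C2 + Ci, by linarith,
    fun lam hlam => (main lam hlam).2⟩

end AuxKey

/-- for a 2-concave maximal symmetric Banach sequence space `E`, the
multiplier space `M(ℓ₂,E)` is 2-convex; in particular it is an interpolation space
with respect to `(ℓ₂, ℓ_∞)`. -/
theorem statement8 (E : SeqSpace) (hconc : E.TwoConcave) (hmax : E.IsMaximal)
    (hsym : E.IsSymmetric) :
    TwoConvexOn (m2Mem E) (m2Norm E) ∧
    IsInterpSpace (Memlp 2) (lpNorm 2) MemLinf linfNorm (m2Mem E) (m2Norm E) := by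
  refine ⟨twoConvex_m2 E hmax, clause1 E hmax hsym, clause2 E hsym, ?_⟩
  intro T h2 hi
  exact clause3 E hmax hsym T h2 hi

end Paper
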